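/- arXiv:2105.07380 — 5 statements merged into one kernel-verified Lean document; each statement's English description precedes it below -/
import Mathlib

section
/- Let H be a real Hilbert space and (G_i)_{i∈I} a finite family of real Hilbert spaces. Let A : H → Set H be 3* monotone and, for every i ∈ I, let B_i : G_i → Set G_i be 3* monotone and L_i : H → G_i a continuous linear operator. Define the set-valued operator M : H → Set H by M x = A x + Σ_{i∈I} L_i*(B_i(L_i x)) (Minkowski sum, where L_i*(B_i(L_i x)) = {L_i* v : v ∈ B_i(L_i x)}), and suppose M is maximally monotone. Then: (1) the interior of (ran A + Σ_{i∈I} L_i*(ran B_i)) equals the interior of ran M, and (2) the closure of (ran A + Σ_{i∈I} L_i*(ran B_i)) equals the closure of ran M; here ran A = ⋃_{x∈H} A x, ran B_i = ⋃_{y∈G_i} B_i y, L_i*(ran B_i) = {L_i* v : v ∈ ran B_i}, and ran M = ⋃_{x∈H} M x. -/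
/-!
Fix `z` in the domain of `M`. Fitzpatrick bounds `⟪x, b⟫ + ⟪a, u⟫ - ⟪a, b⟫ ≤ c` (over the graph
`b ∈ M a`) add up along sums of operators and pull back along `Lᵢ* ∘ Bᵢ ∘ Lᵢ`, so the `3*`
hypotheses put every `w ∈ ran A + Σᵢ Lᵢ*(ran Bᵢ)` in the Fitzpatrick domain of `M` at `z`, while
`ran M` lies in that sum. For maximally monotone `M` this is the Brézis–Haraux situation, argued
with the resolvent points `w - t • xₜ ∈ M xₜ` given by Minty's theorem: a Fitzpatrick bound at
`(z, w)` forces `t • xₜ → 0`, so `w ∈ closure (ran M)`; bounds on a whole neighbourhood of `w`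
bound `xₜ` uniformly by Banach–Steinhaus, monotonicity then makes `xₜ` Cauchy as `t ↓ 0`, and the
graph of `M` is closed, so `w ∈ ran M`. Minty's theorem is proved by minimizing
`c + ‖x‖² / 2 + ‖u‖² / 2` over the Fitzpatrick epigraph: this is strongly convex, so minimizing
sequences converge, and the first-order condition at the minimizer yields `-x ∈ M x`.
-/

open RealInnerProductSpace Pointwise Filter Topology

lemma nonneg_of_forall_nonneg_mul_add_sq {p q : ℝ}
    (h : ∀ t : ℝ, 0 < t → t ≤ 1 → 0 ≤ t * p + t ^ 2 * q) : 0 ≤ p := by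
  have hlim : Tendsto (fun t : ℝ => p + t * q) (𝓝[>] 0) (𝓝 p) := by
    simpa using (tendsto_const_nhds.add (tendsto_id.mul_const q)).mono_left
      (nhdsWithin_le_nhds (a := (0 : ℝ)))
  refine ge_of_tendsto hlim ?_
  filter_upwards [Ioc_mem_nhdsGT one_pos] with t ht
  exact nonneg_of_mul_nonneg_right (by linarith [h t ht.1 ht.2]) ht.1

lemma cauchySeq_of_dist_sq_le {X : Type*} [PseudoMetricSpace X] {s : ℕ → X} {e : ℕ → ℝ}
    (he : Tendsto e atTop (𝓝 0)) (h : ∀ n k, dist (s n) (s k) ^ 2 ≤ e n + e k) :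
    CauchySeq s := by
  refine Metric.cauchySeq_iff.2 fun ε hε => ?_
  obtain ⟨N, hN⟩ := eventually_atTop.1 (he.eventually (gt_mem_nhds (half_pos (pow_pos hε 2))))
  refine ⟨N, fun n hn k hk => ?_⟩
  have := h n k
  have := hN n hn
  have := hN k hk
  exact lt_of_pow_lt_pow_left₀ 2 hε.le (by linarith)

section InnerProductSpace

variable {E : Type*} [NormedAddCommGroup E] [InnerProductSpace ℝ E]

lemma norm_add_smul_sq (x y : E) (t : ℝ) :
    ‖x + t • y‖ ^ 2 = ‖x‖ ^ 2 + 2 * t * ⟪x, y⟫ + t ^ 2 * ‖y‖ ^ 2 := by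
  rw [norm_add_sq_real, inner_smul_right, norm_smul, mul_pow, Real.norm_eq_abs, sq_abs]
  ring

lemma exists_norm_le_of_eventually_inner_le [CompleteSpace E] {ι : Type*} {x : ι → E}
    (h : ∀ᶠ y in 𝓝 (0 : E), ∃ C, ∀ i, ⟪x i, y⟫ ≤ C) : ∃ C, ∀ i, ‖x i‖ ≤ C := by
  have hpt : ∀ y, ∃ C, ∀ i, ‖innerSL ℝ (x i) y‖ ≤ C := by
    intro y
    have hsmul : Tendsto (fun t : ℝ => t • y) (𝓝[>] 0) (𝓝 0) := by
      simpa using (tendsto_id.smul_const y).mono_left (nhdsWithin_le_nhds (a := (0 : ℝ)))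
    have hneg : ∀ᶠ y in 𝓝 (0 : E), ∃ C, ∀ i, ⟪x i, -y⟫ ≤ C :=
      (continuous_neg.tendsto' (0 : E) 0 neg_zero).eventually h
    obtain ⟨t, ⟨C₁, h₁⟩, ⟨C₂, h₂⟩, ht⟩ :=
      ((hsmul.eventually h).and ((hsmul.eventually hneg).and self_mem_nhdsWithin)).exists
    refine ⟨max C₁ C₂ / t, fun i => ?_⟩
    have h₁ := h₁ i
    have h₂ := h₂ i
    rw [inner_neg_right, inner_smul_right] at h₂
    rw [inner_smul_right] at h₁
    rw [innerSL_apply_apply, Real.norm_eq_abs, le_div_iff₀ ht, ← abs_of_pos ht, ← abs_mul,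
      abs_le]
    constructor <;> linarith [le_max_left C₁ C₂, le_max_right C₁ C₂]
  obtain ⟨C, hC⟩ := banach_steinhaus hpt
  exact ⟨C, fun i => by simpa only [innerSL_apply_norm] using hC i⟩

def IsMonotoneOperator (M : E → Set E) : Prop :=
  ∀ x y u v, u ∈ M x → v ∈ M y → 0 ≤ ⟪x - y, u - v⟫

def IsMaximalMonotone (M : E → Set E) : Prop :=
  IsMonotoneOperator M ∧ ∀ x u, (∀ y v, v ∈ M y → 0 ≤ ⟪x - y, u - v⟫) → u ∈ M x

/-- `c` bounds the Fitzpatrick function `(x, u) ↦ sup {⟪x, b⟫ + ⟪a, u⟫ - ⟪a, b⟫ | b ∈ M a}`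
at `(x, u)`: these triples form its epigraph, which avoids junk values of `sSup`. -/
def FitzpatrickLE (M : E → Set E) (x u : E) (c : ℝ) : Prop :=
  ∀ a b, b ∈ M a → ⟪x, b⟫ + ⟪a, u⟫ - ⟪a, b⟫ ≤ c

variable {M : E → Set E}

namespace FitzpatrickLE

variable {x u : E} {c : ℝ}

lemma mono (h : FitzpatrickLE M x u c) {c' : ℝ} (hc : c ≤ c') : FitzpatrickLE M x u c' :=
  fun a b hab => (h a b hab).trans hc

lemma of_bddAbove (h : BddAbove {r : ℝ | ∃ y v, v ∈ M y ∧ r = ⟪x - y, v - u⟫}) :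
    ∃ c, FitzpatrickLE M x u c := by
  obtain ⟨C, hC⟩ := h
  refine ⟨C + ⟪x, u⟫, fun a b hab => ?_⟩
  have := hC ⟨a, b, hab, rfl⟩
  simp only [inner_sub_left, inner_sub_right] at this
  linarith

lemma add_smul_sub {x' u' : E} {c' t : ℝ} (h : FitzpatrickLE M x u c)
    (h' : FitzpatrickLE M x' u' c') (ht₀ : 0 ≤ t) (ht₁ : t ≤ 1) :
    FitzpatrickLE M (x + t • (x' - x)) (u + t • (u' - u)) (c + t * (c' - c)) := by
  intro a b hab
  have e : ⟪x + t • (x' - x), b⟫ + ⟪a, u + t • (u' - u)⟫ - ⟪a, b⟫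
      = (1 - t) * (⟪x, b⟫ + ⟪a, u⟫ - ⟪a, b⟫) + t * (⟪x', b⟫ + ⟪a, u'⟫ - ⟪a, b⟫) := by
    simp only [inner_add_left, inner_add_right, inner_smul_left, inner_smul_right,
      inner_sub_left, inner_sub_right, RCLike.conj_to_real]
    ring
  rw [e]
  nlinarith [h a b hab, h' a b hab]

lemma norm_sub_sq_add_le {m : ℝ}
    (hm : ∀ x u c, FitzpatrickLE M x u c → m ≤ c + ‖x‖ ^ 2 / 2 + ‖u‖ ^ 2 / 2)
    {x' u' : E} {c' : ℝ} (h : FitzpatrickLE M x u c) (h' : FitzpatrickLE M x' u' c') :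
    ‖x - x'‖ ^ 2 + ‖u - u'‖ ^ 2
      ≤ 4 * ((c + ‖x‖ ^ 2 / 2 + ‖u‖ ^ 2 / 2) + (c' + ‖x'‖ ^ 2 / 2 + ‖u'‖ ^ 2 / 2) - 2 * m) := by
  have hmid := hm _ _ _ (h.add_smul_sub h' (t := 1 / 2) (by norm_num) (by norm_num))
  have hx := norm_add_smul_sq x (x' - x) 1
  have hu := norm_add_smul_sq u (u' - u) 1
  rw [norm_add_smul_sq, norm_add_smul_sq] at hmid
  rw [one_smul, add_sub_cancel] at hx hu
  rw [norm_sub_rev x, norm_sub_rev u]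
  linarith

lemma of_tendsto {ι : Type*} {l : Filter ι} [l.NeBot] {xs us : ι → E} {cs : ι → ℝ}
    (hx : Tendsto xs l (𝓝 x)) (hu : Tendsto us l (𝓝 u)) (hc : Tendsto cs l (𝓝 c))
    (h : ∀ i, FitzpatrickLE M (xs i) (us i) (cs i)) : FitzpatrickLE M x u c := fun a b hab =>
  le_of_tendsto_of_tendsto
    (((hx.inner tendsto_const_nhds).add (tendsto_const_nhds.inner hu)).sub_const _) hc
    (Eventually.of_forall fun i => h i a b hab)

lemma inner_add_mul_le {z w x : E} {t : ℝ} (h : FitzpatrickLE M z u c) (hx : w - t • x ∈ M x) :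
    ⟪x, u - w⟫ + t * (‖x‖ ^ 2 - ⟪z, x⟫) ≤ c - ⟪z, w⟫ := by
  have := h x _ hx
  simp only [inner_sub_right, inner_smul_right, real_inner_self_eq_norm_sq] at this ⊢
  linarith

lemma add {A B : E → Set E} {u' : E} {c' : ℝ} (hA : FitzpatrickLE A x u c)
    (hB : FitzpatrickLE B x u' c') : FitzpatrickLE (A + B) x (u + u') (c + c') := by
  rintro a _ ⟨b, hb, b', hb', rfl⟩
  have := hA a b hb
  have := hB a b' hb'
  simp only [inner_add_right] at *
  linarith

lemma sum {ι : Type*} {T : ι → E → Set E} {u : ι → E} {c : ι → ℝ} (s : Finset ι)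
    (h : ∀ i ∈ s, FitzpatrickLE (T i) x (u i) (c i)) :
    FitzpatrickLE (∑ i ∈ s, T i) x (∑ i ∈ s, u i) (∑ i ∈ s, c i) := by
  classical
  induction s using Finset.induction_on with
  | empty =>
    rintro a b hb
    rw [Finset.sum_apply, Finset.sum_empty, Set.mem_zero] at hb
    simp [hb]
  | insert i s hi ih =>
    simp only [Finset.sum_insert hi]
    exact (h i (Finset.mem_insert_self i s)).add
      (ih fun j hj => h j (Finset.mem_insert_of_mem hj))

lemma comp_adjoint {F : Type*} [NormedAddCommGroup F] [InnerProductSpace ℝ F] [CompleteSpace E]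
    [CompleteSpace F] {B : F → Set F} (L : E →L[ℝ] F) {u : F}
    (h : FitzpatrickLE B (L x) u c) :
    FitzpatrickLE (fun y => ContinuousLinearMap.adjoint L '' B (L y)) x
      (ContinuousLinearMap.adjoint L u) c := by
  rintro a _ ⟨b, hb, rfl⟩
  simpa only [ContinuousLinearMap.adjoint_inner_right] using h (L a) b hb

end FitzpatrickLE

lemma IsMonotoneOperator.fitzpatrickLE (hM : IsMonotoneOperator M) {a b : E} (hab : b ∈ M a) :
    FitzpatrickLE M a b ⟪a, b⟫ := by
  intro a' b' hab'
  have := hM a a' b b' hab hab'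
  simp only [inner_sub_left, inner_sub_right] at this
  linarith

lemma IsMonotoneOperator.norm_sub_sq_le_of_resolvent (hM : IsMonotoneOperator M) {w a b : E}
    {s t : ℝ} (hs : 0 < s) (hst : s < t) (ha : w - t • a ∈ M a) (hb : w - s • b ∈ M b) :
    ‖a - b‖ ^ 2 ≤ ‖b‖ ^ 2 - ‖a‖ ^ 2 := by
  have hmono := hM a b _ _ ha hb
  rw [sub_sub_sub_cancel_left] at hmono
  simp only [inner_sub_left, inner_sub_right, inner_smul_right, real_inner_self_eq_norm_sq,
    real_inner_comm a b] at hmono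
  have hab : (t - s) * (‖a‖ ^ 2 - ⟪a, b⟫) ≤ 0 := by
    nlinarith [sq_nonneg ‖a - b‖, norm_sub_sq_real a b]
  have := nonpos_of_mul_nonpos_right hab (sub_pos.2 hst)
  rw [norm_sub_sq_real]
  linarith

lemma IsMonotoneOperator.cauchySeq_of_resolvent (hM : IsMonotoneOperator M) {w : E}
    {t : ℕ → ℝ} {x : ℕ → E} (ht : StrictAnti t) (ht₀ : ∀ k, 0 < t k)
    (hx : ∀ k, w - t k • x k ∈ M (x k)) {C : ℝ} (hC : ∀ k, ‖x k‖ ≤ C) : CauchySeq x := by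
  have hle : ∀ k l, k < l → ‖x k - x l‖ ^ 2 ≤ ‖x l‖ ^ 2 - ‖x k‖ ^ 2 := fun k l hkl =>
    hM.norm_sub_sq_le_of_resolvent (ht₀ l) (ht hkl) (hx k) (hx l)
  have hmono : Monotone fun k => ‖x k‖ ^ 2 := monotone_nat_of_le_succ fun k => by
    linarith [hle k (k + 1) k.lt_succ_self, sq_nonneg ‖x k - x (k + 1)‖]
  have hbdd : BddAbove (Set.range fun k => ‖x k‖ ^ 2) := by
    refine ⟨C ^ 2, ?_⟩
    rintro _ ⟨k, rfl⟩
    exact pow_le_pow_left₀ (norm_nonneg _) (hC k) 2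
  have hS : ∀ k, ‖x k‖ ^ 2 ≤ ⨆ k, ‖x k‖ ^ 2 := le_ciSup hbdd
  refine cauchySeq_of_dist_sq_le (e := fun k => (⨆ k, ‖x k‖ ^ 2) - ‖x k‖ ^ 2) ?_ fun k l => ?_
  · convert (tendsto_atTop_ciSup hmono hbdd).const_sub (⨆ k, ‖x k‖ ^ 2) using 2
    exact (sub_self _).symm
  · rw [dist_eq_norm]
    rcases lt_trichotomy k l with hkl | rfl | hkl
    · linarith [hle k l hkl, hS l]
    · simp [hS k]
    · rw [norm_sub_rev]
      linarith [hle l k hkl, hS k]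

namespace IsMaximalMonotone

variable (hM : IsMaximalMonotone M)
include hM

lemma exists_mem : ∃ x u, u ∈ M x := by
  by_contra! h
  exact h 0 0 (hM.2 0 0 fun y v hv => (h y v hv).elim)

lemma inner_le {x u : E} {c : ℝ} (h : FitzpatrickLE M x u c) : ⟪x, u⟫ ≤ c := by
  by_contra! hlt
  have hmem : u ∈ M x := hM.2 x u fun a b hab => by
    have := h a b hab
    simp only [inner_sub_left, inner_sub_right]
    linarith
  linarith [h x u hmem]

lemma mem_of_tendsto {ι : Type*} {l : Filter ι} [l.NeBot] {x : ι → E} {v : ι → E} {x₀ v₀ : E}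
    (hx : Tendsto x l (𝓝 x₀)) (hv : Tendsto v l (𝓝 v₀)) (hmem : ∀ i, v i ∈ M (x i)) :
    v₀ ∈ M x₀ :=
  hM.2 _ _ fun y u hu => ge_of_tendsto ((hx.sub_const y).inner (hv.sub_const u))
    (Eventually.of_forall fun i => hM.1 _ _ _ _ (hmem i) hu)

lemma image_smul_sub (w : E) {c : ℝ} (hc : 0 < c) :
    IsMaximalMonotone fun x => (fun v => c • (v - w)) '' M x := by
  refine ⟨?_, fun x u hu => ?_⟩
  · rintro x y _ _ ⟨u, hu, rfl⟩ ⟨v, hv, rfl⟩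
    rw [← smul_sub, sub_sub_sub_cancel_right, inner_smul_right]
    exact mul_nonneg hc.le (hM.1 x y u v hu hv)
  · refine ⟨w + c⁻¹ • u, hM.2 x _ fun y v hv => ?_, by simp [hc.ne']⟩
    have e : w + c⁻¹ • u - v = c⁻¹ • (u - c • (v - w)) := by
      rw [smul_sub, smul_smul, inv_mul_cancel₀ hc.ne', one_smul]
      abel
    rw [e, inner_smul_right]
    exact mul_nonneg (inv_nonneg.2 hc.le) (hu y _ ⟨v, hv, rfl⟩)

variable [CompleteSpace E]

theorem exists_fitzpatrickLE_forall_le : ∃ x u c, FitzpatrickLE M x u c ∧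
    ∀ x' u' c', FitzpatrickLE M x' u' c' →
      c + ‖x‖ ^ 2 / 2 + ‖u‖ ^ 2 / 2 ≤ c' + ‖x'‖ ^ 2 / 2 + ‖u'‖ ^ 2 / 2 := by
  set T : Set ℝ := {r | ∃ x u c, FitzpatrickLE M x u c ∧ r = c + ‖x‖ ^ 2 / 2 + ‖u‖ ^ 2 / 2}
  obtain ⟨p, q, hpq⟩ := hM.exists_mem
  have hT : T.Nonempty := ⟨_, p, q, _, hM.1.fitzpatrickLE hpq, rfl⟩
  have hT₀ : BddBelow T := by
    refine ⟨0, ?_⟩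
    rintro _ ⟨x, u, c, h, rfl⟩
    nlinarith [hM.inner_le h, norm_add_sq_real x u, sq_nonneg ‖x + u‖]
  set m := sInf T
  have hm : ∀ x u c, FitzpatrickLE M x u c → m ≤ c + ‖x‖ ^ 2 / 2 + ‖u‖ ^ 2 / 2 :=
    fun x u c h => csInf_le hT₀ ⟨x, u, c, h, rfl⟩
  have hseq : ∀ n : ℕ, ∃ x u c, FitzpatrickLE M x u c ∧
      c + ‖x‖ ^ 2 / 2 + ‖u‖ ^ 2 / 2 < m + 1 / (n + 1) := fun n => by
    obtain ⟨_, ⟨x, u, c, h, rfl⟩, hlt⟩ :=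
      exists_lt_of_csInf_lt hT (lt_add_of_pos_right m Nat.one_div_pos_of_nat)
    exact ⟨x, u, c, h, hlt⟩
  choose xs us cs hF hlt using hseq
  have he : Tendsto (fun n : ℕ => 4 * (1 / ((n : ℝ) + 1))) atTop (𝓝 0) := by
    simpa using tendsto_one_div_add_atTop_nhds_zero_nat.const_mul (4 : ℝ)
  have hcauchy : ∀ n k, ‖xs n - xs k‖ ^ 2 + ‖us n - us k‖ ^ 2
      ≤ 4 * (1 / ((n : ℝ) + 1)) + 4 * (1 / ((k : ℝ) + 1)) := fun n k => by
    linarith [(hF n).norm_sub_sq_add_le hm (hF k), hlt n, hlt k]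
  obtain ⟨x, hx⟩ := cauchySeq_tendsto_of_complete <|
    cauchySeq_of_dist_sq_le (s := xs) he fun n k => by
      rw [dist_eq_norm]; linarith [hcauchy n k, sq_nonneg ‖us n - us k‖]
  obtain ⟨u, hu⟩ := cauchySeq_tendsto_of_complete <|
    cauchySeq_of_dist_sq_le (s := us) he fun n k => by
      rw [dist_eq_norm]; linarith [hcauchy n k, sq_nonneg ‖xs n - xs k‖]
  have hc : Tendsto (fun n : ℕ => m + 1 / ((n : ℝ) + 1) - ‖xs n‖ ^ 2 / 2 - ‖us n‖ ^ 2 / 2)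
      atTop (𝓝 (m - ‖x‖ ^ 2 / 2 - ‖u‖ ^ 2 / 2)) := by
    simpa using ((tendsto_const_nhds.add tendsto_one_div_add_atTop_nhds_zero_nat).sub
      ((hx.norm.pow 2).div_const 2)).sub ((hu.norm.pow 2).div_const 2)
  refine ⟨x, u, _, FitzpatrickLE.of_tendsto hx hu hc fun n => (hF n).mono ?_,
    fun x' u' c' h' => by linarith [hm x' u' c' h']⟩
  linarith [hlt n]

/-- Minty's theorem, in the normalized form `0 ∈ ran (M + id)`. -/
theorem exists_neg_mem : ∃ x, -x ∈ M x := by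
  obtain ⟨x, u, c, hF, hmin⟩ := hM.exists_fitzpatrickLE_forall_le
  have hopt : ∀ a b, b ∈ M a → 0 ≤ ⟪a, b⟫ - c + ⟪x, a - x⟫ + ⟪u, b - u⟫ := by
    intro a b hab
    refine nonneg_of_forall_nonneg_mul_add_sq (q := (‖a - x‖ ^ 2 + ‖b - u‖ ^ 2) / 2)
      fun t ht₀ ht₁ => ?_
    have := hmin _ _ _ (hF.add_smul_sub (hM.1.fitzpatrickLE hab) ht₀.le ht₁)
    rw [norm_add_smul_sq, norm_add_smul_sq] at this
    linarith
  have key : ∀ a b, b ∈ M a → ‖x + u‖ ^ 2 ≤ ⟪-u - a, -x - b⟫ := by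
    intro a b hab
    have := hopt a b hab
    have := hM.inner_le hF
    rw [norm_add_sq_real]
    simp only [inner_sub_left, inner_sub_right, inner_neg_left, inner_neg_right,
      real_inner_self_eq_norm_sq, real_inner_comm x a, real_inner_comm x u] at *
    linarith
  have hmem : -x ∈ M (-u) := hM.2 _ _ fun a b hab => (sq_nonneg _).trans (key a b hab)
  have hxu : x + u = 0 := by simpa using key _ _ hmem
  exact ⟨x, by rwa [neg_eq_of_add_eq_zero_left hxu] at hmem⟩

theorem exists_sub_smul_mem (w : E) {t : ℝ} (ht : 0 < t) : ∃ x, w - t • x ∈ M x := by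
  obtain ⟨x, v, hv, hvx⟩ := (hM.image_smul_sub w (inv_pos.2 ht)).exists_neg_mem
  refine ⟨x, ?_⟩
  convert hv using 1
  rw [sub_eq_add_neg, ← smul_neg, ← hvx, smul_inv_smul₀ ht.ne', add_sub_cancel]

theorem mem_closure_range {z w : E} {c : ℝ} (hF : FitzpatrickLE M z w c) :
    w ∈ closure (⋃ x, M x) := by
  set t : ℕ → ℝ := fun k => 1 / ((k : ℝ) + 1)
  have ht₀ : ∀ k, 0 < t k := fun k => Nat.one_div_pos_of_nat
  have ht : Tendsto t atTop (𝓝 0) := tendsto_one_div_add_atTop_nhds_zero_nat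
  choose x hx using fun k => hM.exists_sub_smul_mem w (ht₀ k)
  have hbound : ∀ k, ‖t k • x k‖ ^ 2 ≤ 2 * t k * (c - ⟪z, w⟫) + t k ^ 2 * ‖z‖ ^ 2 := by
    intro k
    have h := hF.inner_add_mul_le (hx k)
    rw [sub_self, inner_zero_right, zero_add] at h
    rw [norm_smul, Real.norm_of_nonneg (ht₀ k).le, mul_pow]
    nlinarith [mul_le_mul_of_nonneg_left h (ht₀ k).le, real_inner_le_norm z (x k),
      sq_nonneg (t k * ‖x k‖ - t k * ‖z‖), ht₀ k]
  have hsq : Tendsto (fun k => ‖t k • x k‖ ^ 2) atTop (𝓝 0) := by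
    refine squeeze_zero (fun k => sq_nonneg _) hbound ?_
    simpa using ((ht.const_mul 2).mul_const (c - ⟪z, w⟫)).add ((ht.pow 2).mul_const (‖z‖ ^ 2))
  have hsmul : Tendsto (fun k => t k • x k) atTop (𝓝 0) := by
    refine tendsto_zero_iff_norm_tendsto_zero.2 ?_
    simpa [Real.sqrt_sq (norm_nonneg _)] using hsq.sqrt
  exact mem_closure_of_tendsto (by simpa using tendsto_const_nhds.sub hsmul)
    (Eventually.of_forall fun k => Set.mem_iUnion.2 ⟨x k, hx k⟩)

theorem mem_range_of_mem_interior {z w : E}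
    (hw : w ∈ interior {u | ∃ c, FitzpatrickLE M z u c}) : w ∈ ⋃ x, M x := by
  set t : ℕ → ℝ := fun k => 1 / ((k : ℝ) + 1)
  have ht₀ : ∀ k, 0 < t k := fun k => Nat.one_div_pos_of_nat
  have ht₁ : ∀ k, t k ≤ 1 := fun k => by
    rw [div_le_one (by positivity)]
    linarith [k.cast_nonneg (α := ℝ)]
  have ht : Tendsto t atTop (𝓝 0) := tendsto_one_div_add_atTop_nhds_zero_nat
  have ht_anti : StrictAnti t := fun k l hkl =>
    one_div_lt_one_div_of_lt (by positivity) (by exact_mod_cast Nat.succ_lt_succ hkl)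
  choose x hx using fun k => hM.exists_sub_smul_mem w (ht₀ k)
  have hnear : ∀ᶠ h in 𝓝 (0 : E), ∃ C, ∀ k, ⟪x k, h⟫ ≤ C := by
    have : Tendsto (fun h : E => w + h) (𝓝 0) (𝓝 w) := by
      simpa using tendsto_const_nhds.add (tendsto_id (x := 𝓝 (0 : E)))
    filter_upwards [this.eventually (mem_interior_iff_mem_nhds.1 hw)] with h ⟨c, hc⟩
    refine ⟨c - ⟪z, w⟫ + ‖z‖ ^ 2 / 4, fun k => ?_⟩
    have h₁ := hc.inner_add_mul_le (hx k)
    rw [add_sub_cancel_left] at h₁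
    have h₂ : -(‖z‖ ^ 2 / 4) ≤ ‖x k‖ ^ 2 - ⟪z, x k⟫ := by
      nlinarith [real_inner_le_norm z (x k), sq_nonneg (‖x k‖ - ‖z‖ / 2)]
    nlinarith [mul_le_mul_of_nonneg_left h₂ (ht₀ k).le, ht₁ k, sq_nonneg ‖z‖]
  obtain ⟨C, hC⟩ := exists_norm_le_of_eventually_inner_le hnear
  obtain ⟨x₀, hx₀⟩ :=
    cauchySeq_tendsto_of_complete (hM.1.cauchySeq_of_resolvent ht_anti ht₀ hx hC)
  have hv : Tendsto (fun k => w - t k • x k) atTop (𝓝 w) := by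
    simpa using tendsto_const_nhds.sub (ht.smul hx₀)
  exact Set.mem_iUnion.2 ⟨x₀, hM.mem_of_tendsto hx₀ hv hx⟩

theorem interior_eq_and_closure_eq {z : E} {S : Set E} (hMS : ⋃ x, M x ⊆ S)
    (hS : S ⊆ {w | ∃ c, FitzpatrickLE M z w c}) :
    interior S = interior (⋃ x, M x) ∧ closure S = closure (⋃ x, M x) :=
  ⟨(interior_maximal (fun _ hw => hM.mem_range_of_mem_interior (interior_mono hS hw))
      isOpen_interior).antisymm (interior_mono hMS),
    (closure_minimal (fun _ hw => (hS hw).elim fun _ hc => hM.mem_closure_range hc)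
      isClosed_closure).antisymm (closure_mono hMS)⟩

end IsMaximalMonotone

end InnerProductSpace

lemma mem_add_fintype_sum_image_iff {α ι : Type*} [AddCommMonoid α] [Fintype ι] {G : ι → Type*}
    {X : Set α} {Y : ∀ i, Set (G i)} {f : ∀ i, G i → α} {w : α} :
    w ∈ X + ∑ i, f i '' Y i ↔
      ∃ a ∈ X, ∃ b : ∀ i, G i, (∀ i, b i ∈ Y i) ∧ a + ∑ i, f i (b i) = w := by
  simp only [Set.mem_add, Set.mem_fintype_sum, Set.mem_image]
  constructor
  · rintro ⟨a, ha, _, ⟨g, hg, rfl⟩, rfl⟩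
    choose b hb hbg using hg
    exact ⟨a, ha, b, hb, by simp only [hbg]⟩
  · rintro ⟨a, ha, b, hb, rfl⟩
    exact ⟨a, ha, _, ⟨fun i => f i (b i), fun i => ⟨b i, hb i, rfl⟩, rfl⟩, rfl⟩

theorem brezis_haraux_composite_sum_general
    {H : Type*} [NormedAddCommGroup H] [InnerProductSpace ℝ H] [CompleteSpace H]
    {I : Type*} [Fintype I]
    (G : I → Type*) [∀ i, NormedAddCommGroup (G i)] [∀ i, InnerProductSpace ℝ (G i)]
    [∀ i, CompleteSpace (G i)]
    (A : H → Set H) (B : ∀ i, G i → Set (G i)) (L : ∀ i, H →L[ℝ] G i)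
    (hA3 : ∀ x u : H, (A x).Nonempty → u ∈ ⋃ z, A z →
      BddAbove {r : ℝ | ∃ y v, v ∈ A y ∧ r = ⟪x - y, v - u⟫})
    (hB3 : ∀ i, ∀ x u : G i, (B i x).Nonempty → u ∈ ⋃ z, B i z →
      BddAbove {r : ℝ | ∃ y v, v ∈ B i y ∧ r = ⟪x - y, v - u⟫})
    (M : H → Set H)
    (hM : ∀ x, M x = A x + ∑ i, (ContinuousLinearMap.adjoint (L i)) '' (B i (L i x)))
    (hMmono : ∀ x y u v : H, u ∈ M x → v ∈ M y → ⟪x - y, u - v⟫ ≥ 0)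
    (hMmax : ∀ x u : H, (∀ y v : H, v ∈ M y → ⟪x - y, u - v⟫ ≥ 0) → u ∈ M x) :
    interior ((⋃ x, A x) + ∑ i, (ContinuousLinearMap.adjoint (L i)) '' (⋃ y, B i y))
      = interior (⋃ x, M x) ∧
    closure ((⋃ x, A x) + ∑ i, (ContinuousLinearMap.adjoint (L i)) '' (⋃ y, B i y))
      = closure (⋃ x, M x) := by
  have hMsum : M = A + ∑ i, fun x => ContinuousLinearMap.adjoint (L i) '' B i (L i x) :=
    funext fun x => by rw [hM x, Pi.add_apply, Finset.sum_apply]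
  have hMmax' : IsMaximalMonotone M := ⟨hMmono, hMmax⟩
  obtain ⟨z, v, hzv⟩ := hMmax'.exists_mem
  obtain ⟨a₀, ha₀, b₀, hb₀, -⟩ := mem_add_fintype_sum_image_iff.1 (hM z ▸ hzv)
  refine hMmax'.interior_eq_and_closure_eq (z := z) ?_ fun w hw => ?_
  · intro v hv
    obtain ⟨y, hv⟩ := Set.mem_iUnion.1 hv
    rw [hM y] at hv
    obtain ⟨a, ha, b, hb, rfl⟩ := mem_add_fintype_sum_image_iff.1 hv
    exact mem_add_fintype_sum_image_iff.2
      ⟨a, Set.mem_iUnion_of_mem y ha, b, fun i => Set.mem_iUnion_of_mem _ (hb i), rfl⟩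
  · obtain ⟨a, ha, b, hb, rfl⟩ := mem_add_fintype_sum_image_iff.1 hw
    obtain ⟨cA, hcA⟩ := FitzpatrickLE.of_bddAbove (hA3 z a ⟨a₀, ha₀⟩ ha)
    choose cB hcB using fun i =>
      FitzpatrickLE.of_bddAbove (hB3 i (L i z) (b i) ⟨b₀ i, hb₀ i⟩ (hb i))
    rw [Set.mem_ofPred_eq, hMsum]
    exact ⟨_, hcA.add (FitzpatrickLE.sum _ fun i _ => (hcB i).comp_adjoint (L i))⟩

/-- Brézis–Haraux-type theorem: if `A` and the `B i` are `3*` monotone and the composite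
sum `M : x ↦ A x + Σᵢ Lᵢ*(Bᵢ(Lᵢ x))` is maximally monotone, then the interior (resp. the
closure) of `ran A + Σᵢ Lᵢ*(ran Bᵢ)` equals the interior (resp. the closure) of `ran M`. -/
theorem brezis_haraux_composite_sum
    {H : Type*} [NormedAddCommGroup H] [InnerProductSpace ℝ H] [CompleteSpace H]
    {I : Type*} [Fintype I]
    (G : I → Type*) [∀ i, NormedAddCommGroup (G i)] [∀ i, InnerProductSpace ℝ (G i)]
    [∀ i, CompleteSpace (G i)]
    (A : H → Set H) (B : ∀ i, G i → Set (G i)) (L : ∀ i, H →L[ℝ] G i)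
    (hAmono : ∀ x y u v : H, u ∈ A x → v ∈ A y → ⟪x - y, u - v⟫ ≥ 0)
    (hA3 : ∀ x u : H, (A x).Nonempty → u ∈ ⋃ z, A z →
      BddAbove {r : ℝ | ∃ y v, v ∈ A y ∧ r = ⟪x - y, v - u⟫})
    (hBmono : ∀ i, ∀ x y u v : G i, u ∈ B i x → v ∈ B i y → ⟪x - y, u - v⟫ ≥ 0)
    (hB3 : ∀ i, ∀ x u : G i, (B i x).Nonempty → u ∈ ⋃ z, B i z →
      BddAbove {r : ℝ | ∃ y v, v ∈ B i y ∧ r = ⟪x - y, v - u⟫})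
    (M : H → Set H)
    (hM : ∀ x, M x = A x + ∑ i, (ContinuousLinearMap.adjoint (L i)) '' (B i (L i x)))
    (hMmono : ∀ x y u v : H, u ∈ M x → v ∈ M y → ⟪x - y, u - v⟫ ≥ 0)
    (hMmax : ∀ x u : H, (∀ y v : H, v ∈ M y → ⟪x - y, u - v⟫ ≥ 0) → u ∈ M x) :
    interior ((⋃ x, A x) + ∑ i, (ContinuousLinearMap.adjoint (L i)) '' (⋃ y, B i y))
      = interior (⋃ x, M x) ∧
    closure ((⋃ x, A x) + ∑ i, (ContinuousLinearMap.adjoint (L i)) '' (⋃ y, B i y))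
      = closure (⋃ x, M x) :=
  brezis_haraux_composite_sum_general G A B L hA3 hB3 M hM hMmono hMmax
end

section
/- Suppose there exists x̄ ∈ C such that F_i(L_i x̄) = p_i for every i ∈ I. Then for every x ∈ H the following are equivalent: (a) x ∈ C and, for every y ∈ C, Σ_{i∈I} ω_i ⟪L_i(y − x), F_i(L_i x) − p_i⟫ ≥ 0; (b) x ∈ C and F_i(L_i x) = p_i for every i ∈ I. In other words, the solution set of the relaxed variational inequality problem coincides with the solution set of the exact problem whenever the latter is nonempty. -/
/-!
Test the relaxed inequality at the exact solution `y = x̄`. Since `F_i(L_i x̄) = p_i`, firm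
nonexpansiveness of `F_i` at the pair `(L_i x, L_i x̄)` bounds the `i`-th term by
`-ω_i ‖F_i(L_i x) - p_i‖²`, so a nonnegative sum forces every residual to vanish.
-/

open RealInnerProductSpace

theorem inner_sub_le_neg_norm_sq_of_apply_eq {G : Type*} [NormedAddCommGroup G]
    [InnerProductSpace ℝ G] {F : G → G} {u v p : G}
    (hF : ⟪u - v, F u - F v⟫ ≥ ‖F u - F v‖ ^ 2) (hv : F v = p) :
    ⟪v - u, F u - p⟫ ≤ -‖F u - p‖ ^ 2 := by
  subst hv
  rw [← neg_sub u v, inner_neg_left]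
  linarith

theorem eq_zero_of_sum_pos_mul_nonpos {ι : Type*} [Fintype ι] {ω b : ι → ℝ}
    (hω : ∀ i, 0 < ω i) (hb : ∀ i, 0 ≤ b i) (hsum : ∑ i, ω i * b i ≤ 0) (i : ι) :
    b i = 0 := by
  have hnn : ∀ j ∈ Finset.univ, 0 ≤ ω j * b j := fun j _ => mul_nonneg (hω j).le (hb j)
  have hzero := (Finset.sum_eq_zero_iff_of_nonneg hnn).mp
    (le_antisymm hsum (Finset.sum_nonneg hnn)) i (Finset.mem_univ i)
  exact (mul_eq_zero.mp hzero).resolve_left (hω i).ne'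

theorem relaxed_eq_exact_of_consistent_general
    {H : Type*} [NormedAddCommGroup H] [InnerProductSpace ℝ H]
    {I : Type*} [Fintype I]
    (G : I → Type*) [∀ i, NormedAddCommGroup (G i)] [∀ i, InnerProductSpace ℝ (G i)]
    (ω : I → ℝ) (hω : ∀ i, ω i ∈ Set.Ioo (0 : ℝ) 1)
    (C : Set H)
    (p : ∀ i, G i) (L : ∀ i, H →L[ℝ] G i)
    (F : ∀ i, G i → G i)
    (hF : ∀ i, ∀ u v : G i, ⟪u - v, F i u - F i v⟫ ≥ ‖F i u - F i v‖ ^ 2)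
    (xbar : H) (hxbar : xbar ∈ C) (hxbareq : ∀ i, F i (L i xbar) = p i) :
    ∀ x : H,
      (x ∈ C ∧ ∀ y ∈ C, (∑ i, ω i * ⟪L i (y - x), F i (L i x) - p i⟫) ≥ 0) ↔
      (x ∈ C ∧ ∀ i, F i (L i x) = p i) := by
  intro x
  refine ⟨fun ⟨hxC, hvi⟩ => ⟨hxC, fun i => ?_⟩, fun ⟨hxC, hexact⟩ => ⟨hxC, fun y _ => ?_⟩⟩
  · have hterm : ∀ i, ω i * ⟪L i (xbar - x), F i (L i x) - p i⟫ ≤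
        -(ω i * ‖F i (L i x) - p i‖ ^ 2) := fun i => by
      rw [← mul_neg, map_sub]
      exact mul_le_mul_of_nonneg_left
        (inner_sub_le_neg_norm_sq_of_apply_eq (hF i _ _) (hxbareq i)) (hω i).1.le
    have hsum : ∑ i, ω i * ‖F i (L i x) - p i‖ ^ 2 ≤ 0 := by
      have := (hvi xbar hxbar).le.trans (Finset.sum_le_sum fun i _ => hterm i)
      rwa [Finset.sum_neg_distrib, neg_nonneg] at this
    have hnorm := eq_zero_of_sum_pos_mul_nonpos (fun i => (hω i).1)
      (fun i => sq_nonneg ‖F i (L i x) - p i‖) hsum i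
    rwa [sq_eq_zero_iff, norm_eq_zero, sub_eq_zero] at hnorm
  · simp [hexact]

/-- If the exact problem has a solution, the solution set of the relaxed variational
inequality coincides with that of the exact problem. -/
theorem relaxed_eq_exact_of_consistent
    {H : Type*} [NormedAddCommGroup H] [InnerProductSpace ℝ H] [CompleteSpace H]
    {I : Type*} [Fintype I] [Nonempty I]
    (G : I → Type*) [∀ i, NormedAddCommGroup (G i)] [∀ i, InnerProductSpace ℝ (G i)]
    [∀ i, CompleteSpace (G i)]
    (ω : I → ℝ) (hω : ∀ i, ω i ∈ Set.Ioo (0 : ℝ) 1) (hωsum : ∑ i, ω i = 1)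
    (C : Set H) (hCne : C.Nonempty) (hCcl : IsClosed C) (hCcv : Convex ℝ C)
    (p : ∀ i, G i) (L : ∀ i, H →L[ℝ] G i) (hL : ∀ i, L i ≠ 0)
    (F : ∀ i, G i → G i)
    (hF : ∀ i, ∀ u v : G i, ⟪u - v, F i u - F i v⟫ ≥ ‖F i u - F i v‖ ^ 2)
    (xbar : H) (hxbar : xbar ∈ C) (hxbareq : ∀ i, F i (L i xbar) = p i) :
    ∀ x : H,
      (x ∈ C ∧ ∀ y ∈ C, (∑ i, ω i * ⟪L i (y - x), F i (L i x) - p i⟫) ≥ 0) ↔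
      (x ∈ C ∧ ∀ i, F i (L i x) = p i) :=
  relaxed_eq_exact_of_consistent_general G ω hω C p L F hF xbar hxbar hxbareq
end

section
/- Let x̄₁ and x̄₂ both be solutions to the relaxed problem, i.e., x̄₁, x̄₂ ∈ C and, for every y ∈ C and each k ∈ {1,2}, Σ_{i∈I} ω_i ⟪L_i(y − x̄_k), F_i(L_i x̄_k) − p_i⟫ ≥ 0. Then for every i ∈ I, F_i(L_i x̄₁) = F_i(L_i x̄₂); that is, the values (F_i(L_i x̄))_{i∈I} are the same for every solution x̄ of the relaxed problem. -/
open RealInnerProductSpace Pointwise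

/- Adding the two variational inequalities, tested at `y = x̄₂` and `y = x̄₁` respectively, makes the
`p i` cancel and leaves `∑ ω i ⟪L i x̄₁ - L i x̄₂, F i (L i x̄₁) - F i (L i x̄₂)⟫ ≤ 0`. Each summand is
nonnegative by firm nonexpansiveness, hence zero, and firm nonexpansiveness again bounds
`‖F i (L i x̄₁) - F i (L i x̄₂)‖²` by that summand. -/

def FirmlyNonexpansive {E : Type*} [NormedAddCommGroup E] [InnerProductSpace ℝ E] (F : E → E) :
    Prop :=
  ∀ u v, ‖F u - F v‖ ^ 2 ≤ ⟪u - v, F u - F v⟫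

namespace FirmlyNonexpansive

variable {E : Type*} [NormedAddCommGroup E] [InnerProductSpace ℝ E] {F : E → E}

theorem inner_nonneg (hF : FirmlyNonexpansive F) (u v : E) : 0 ≤ ⟪u - v, F u - F v⟫ :=
  (sq_nonneg _).trans (hF u v)

theorem apply_eq_of_inner_nonpos (hF : FirmlyNonexpansive F) {u v : E}
    (h : ⟪u - v, F u - F v⟫ ≤ 0) : F u = F v := by
  have hsq : ‖F u - F v‖ ^ 2 = 0 := le_antisymm ((hF u v).trans h) (sq_nonneg _)
  rwa [sq_eq_zero_iff, norm_eq_zero, sub_eq_zero] at hsq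

end FirmlyNonexpansive

theorem Finset.eq_zero_of_sum_mul_nonpos {ι : Type*} {s : Finset ι} {w a : ι → ℝ}
    (hw : ∀ i ∈ s, 0 < w i) (ha : ∀ i ∈ s, 0 ≤ a i) (hsum : ∑ i ∈ s, w i * a i ≤ 0) :
    ∀ i ∈ s, a i = 0 := by
  have hterm : ∀ i ∈ s, 0 ≤ w i * a i := fun i hi => mul_nonneg (hw i hi).le (ha i hi)
  intro i hi
  have hzero := (Finset.sum_eq_zero_iff_of_nonneg hterm).mp
    (le_antisymm hsum (Finset.sum_nonneg hterm)) i hi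
  exact (mul_eq_zero.mp hzero).resolve_left (hw i hi).ne'

section RelaxedProblem

variable {H : Type*} [NormedAddCommGroup H] [InnerProductSpace ℝ H]
  {I : Type*} [Fintype I] {G : I → Type*} [∀ i, NormedAddCommGroup (G i)]
  [∀ i, InnerProductSpace ℝ (G i)]
  (ω : I → ℝ) (C : Set H) (p : ∀ i, G i) (L : ∀ i, H →L[ℝ] G i) (F : ∀ i, G i → G i)

def IsRelaxedSolution (x : H) : Prop :=
  x ∈ C ∧ ∀ y ∈ C, 0 ≤ ∑ i, ω i * ⟪L i (y - x), F i (L i x) - p i⟫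

variable {ω C p L F}

theorem IsRelaxedSolution.sum_inner_sub_nonpos {x₁ x₂ : H}
    (h₁ : IsRelaxedSolution ω C p L F x₁) (h₂ : IsRelaxedSolution ω C p L F x₂) :
    ∑ i, ω i * ⟪L i x₁ - L i x₂, F i (L i x₁) - F i (L i x₂)⟫ ≤ 0 := by
  have hsum : ∑ i, ω i * ⟪L i x₁ - L i x₂, F i (L i x₁) - F i (L i x₂)⟫ =
      -(∑ i, ω i * ⟪L i (x₂ - x₁), F i (L i x₁) - p i⟫ +
        ∑ i, ω i * ⟪L i (x₁ - x₂), F i (L i x₂) - p i⟫) := by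
    rw [← Finset.sum_add_distrib, ← Finset.sum_neg_distrib]
    refine Finset.sum_congr rfl fun i _ => ?_
    simp only [map_sub, inner_sub_left, inner_sub_right]
    ring
  rw [hsum, neg_nonpos]
  exact add_nonneg (h₁.2 x₂ h₂.1) (h₂.2 x₁ h₁.1)

theorem IsRelaxedSolution.apply_eq (hω : ∀ i, 0 < ω i) (hF : ∀ i, FirmlyNonexpansive (F i))
    {x₁ x₂ : H} (h₁ : IsRelaxedSolution ω C p L F x₁) (h₂ : IsRelaxedSolution ω C p L F x₂)
    (i : I) : F i (L i x₁) = F i (L i x₂) := by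
  have hzero := Finset.eq_zero_of_sum_mul_nonpos (fun i _ => hω i)
    (fun i _ => (hF i).inner_nonneg _ _) (h₁.sum_inner_sub_nonpos h₂) i (Finset.mem_univ i)
  exact (hF i).apply_eq_of_inner_nonpos hzero.le

end RelaxedProblem

theorem relaxed_solutions_same_values_general
    {H : Type*} [NormedAddCommGroup H] [InnerProductSpace ℝ H]
    {I : Type*} [Fintype I]
    (G : I → Type*) [∀ i, NormedAddCommGroup (G i)] [∀ i, InnerProductSpace ℝ (G i)]
    (ω : I → ℝ) (hω : ∀ i, ω i ∈ Set.Ioo (0 : ℝ) 1)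
    (C : Set H)
    (p : ∀ i, G i) (L : ∀ i, H →L[ℝ] G i)
    (F : ∀ i, G i → G i)
    (hF : ∀ i, ∀ u v : G i, ⟪u - v, F i u - F i v⟫ ≥ ‖F i u - F i v‖ ^ 2)
    (xbar1 xbar2 : H) (h₁ : xbar1 ∈ C) (h₂ : xbar2 ∈ C)
    (hsol₁ : ∀ y ∈ C, (∑ i, ω i * ⟪L i (y - xbar1), F i (L i xbar1) - p i⟫) ≥ 0)
    (hsol₂ : ∀ y ∈ C, (∑ i, ω i * ⟪L i (y - xbar2), F i (L i xbar2) - p i⟫) ≥ 0) :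
    ∀ i, F i (L i xbar1) = F i (L i xbar2) :=
  IsRelaxedSolution.apply_eq (fun i => (hω i).1) hF ⟨h₁, hsol₁⟩ ⟨h₂, hsol₂⟩

/-- Any two solutions of the relaxed variational inequality problem give the same values
`F i (L i xbar)` for every `i`. -/
theorem relaxed_solutions_same_values
    {H : Type*} [NormedAddCommGroup H] [InnerProductSpace ℝ H] [CompleteSpace H]
    {I : Type*} [Fintype I] [Nonempty I]
    (G : I → Type*) [∀ i, NormedAddCommGroup (G i)] [∀ i, InnerProductSpace ℝ (G i)]
    [∀ i, CompleteSpace (G i)]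
    (ω : I → ℝ) (hω : ∀ i, ω i ∈ Set.Ioo (0 : ℝ) 1) (hωsum : ∑ i, ω i = 1)
    (C : Set H) (hCne : C.Nonempty) (hCcl : IsClosed C) (hCcv : Convex ℝ C)
    (p : ∀ i, G i) (L : ∀ i, H →L[ℝ] G i) (hL : ∀ i, L i ≠ 0)
    (F : ∀ i, G i → G i)
    (hF : ∀ i, ∀ u v : G i, ⟪u - v, F i u - F i v⟫ ≥ ‖F i u - F i v‖ ^ 2)
    (xbar1 xbar2 : H) (h₁ : xbar1 ∈ C) (h₂ : xbar2 ∈ C)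
    (hsol₁ : ∀ y ∈ C, (∑ i, ω i * ⟪L i (y - xbar1), F i (L i xbar1) - p i⟫) ≥ 0)
    (hsol₂ : ∀ y ∈ C, (∑ i, ω i * ⟪L i (y - xbar2), F i (L i xbar2) - p i⟫) ≥ 0) :
    ∀ i, F i (L i xbar1) = F i (L i xbar2) :=
  relaxed_solutions_same_values_general G ω hω C p L F hF xbar1 xbar2 h₁ h₂ hsol₁ hsol₂
end

section
/- If C is bounded, then the relaxed problem has a solution: there exists x ∈ C such that Σ_{i∈I} ω_i ⟪L_i(y − x), F_i(L_i x) − p_i⟫ ≥ 0 for every y ∈ C. -/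
/-!
Writing `A x = ∑ ωᵢ Lᵢ* (Fᵢ (Lᵢ x) - pᵢ)`, the relaxed problem is the variational inequality
`⟪y - x, A x⟫ ≥ 0` for all `y ∈ C`, and firm nonexpansiveness of the `Fᵢ` makes `A` monotone and
Lipschitz. For `ε > 0` the operator `A + ε • id` is strongly monotone, so its variational inequality
is solved by the fixed point of the contraction `P_C ∘ (id - γ (A + ε • id))`. By monotonicity these
solutions satisfy Minty's inequality `⟪y - x, A y⟫ ≥ 0` up to an error `O(ε)`, uniformly in `y ∈ C`.
Minty's inequality describes an intersection of weakly closed half-spaces, and `C` is weakly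
compact, so some `x ∈ C` satisfies it exactly; letting `y` tend to `x` along segments in `C`
turns it back into the variational inequality.
-/

open RealInnerProductSpace

section Hilbert

variable {E : Type*} [NormedAddCommGroup E] [InnerProductSpace ℝ E]

theorem Convex.exists_mem_forall_inner_sub_nonpos {C : Set E} (hne : C.Nonempty)
    (hc : IsComplete C) (hcv : Convex ℝ C) (u : E) : ∃ z ∈ C, ∀ w ∈ C, ⟪u - z, w - z⟫ ≤ 0 := by
  obtain ⟨z, hz, hmin⟩ := exists_norm_eq_iInf_of_complete_convex hne hc hcv u
  exact ⟨z, hz, (norm_eq_iInf_iff_real_inner_le_zero hcv hz).1 hmin⟩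

theorem norm_sub_le_of_forall_inner_sub_nonpos {C : Set E} {u v z w : E} (hz : z ∈ C) (hw : w ∈ C)
    (hzu : ∀ c ∈ C, ⟪u - z, c - z⟫ ≤ 0) (hwv : ∀ c ∈ C, ⟪v - w, c - w⟫ ≤ 0) :
    ‖z - w‖ ≤ ‖u - v‖ := by
  have hsq : ‖z - w‖ ^ 2 ≤ ⟪u - v, z - w⟫ := by
    have hsplit : ⟪u - v, z - w⟫ = ‖z - w‖ ^ 2 - ⟪u - z, w - z⟫ - ⟪v - w, z - w⟫ := by
      rw [← real_inner_self_eq_norm_sq, ← neg_sub z w, inner_neg_right,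
        show u - v = (u - z) - (v - w) + (z - w) by abel, inner_add_left, inner_sub_left]
      ring
    linarith [hzu w hw, hwv z hz]
  nlinarith [real_inner_le_norm (u - v) (z - w), norm_nonneg (z - w), norm_nonneg (u - v)]

theorem exists_lipschitzWith_sub_smul_lt_one {B : E → E} {K : NNReal} {ε : ℝ} (hε : 0 < ε)
    (hB : LipschitzWith K B) (hmono : ∀ x y, ε * ‖x - y‖ ^ 2 ≤ ⟪x - y, B x - B y⟫) :
    ∃ γ : ℝ, 0 < γ ∧ ∃ c : NNReal, c < 1 ∧ LipschitzWith c fun x => x - γ • B x := by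
  set D : ℝ := K ^ 2 + ε ^ 2
  have hD : 0 < D := by positivity
  set θ : ℝ := K ^ 2 / D
  have hθ : 0 ≤ θ := by positivity
  -- with `γ = ε / D`, `‖d - γ e‖² ≤ (1 - 2γε + γ²K²) ‖d‖²` and `1 - 2γε + γ²K² = θ - (γε)²`
  have hsq : ∀ x y, ‖(x - (ε / D) • B x) - (y - (ε / D) • B y)‖ ^ 2 ≤ θ * ‖x - y‖ ^ 2 := by
    intro x y
    have hLip : ‖B x - B y‖ ≤ K * ‖x - y‖ := by simpa [dist_eq_norm] using hB.dist_le_mul x y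
    have hγ : 0 < ε / D := by positivity
    rw [show (x - (ε / D) • B x) - (y - (ε / D) • B y) = (x - y) - (ε / D) • (B x - B y) by
        rw [smul_sub]; abel,
      norm_sub_sq_real, real_inner_smul_right, norm_smul, Real.norm_of_nonneg hγ.le]
    have hid : θ = 1 - 2 * (ε / D) * ε + (ε / D) ^ 2 * K ^ 2 + (ε / D * ε) ^ 2 := by
      simp only [θ, D]; field_simp; ring
    have := mul_le_mul_of_nonneg_left (hmono x y) (by positivity : 0 ≤ 2 * (ε / D))
    have := pow_le_pow_left₀ (norm_nonneg _) hLip 2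
    nlinarith [mul_le_mul_of_nonneg_left this (sq_nonneg (ε / D)), sq_nonneg (ε / D * ε),
      sq_nonneg ‖x - y‖]
  refine ⟨ε / D, by positivity, (Real.sqrt θ).toNNReal, ?_, LipschitzWith.of_dist_le' fun x y => ?_⟩
  · rw [Real.toNNReal_lt_one, Real.sqrt_lt' one_pos, one_pow]
    exact (div_lt_one hD).2 (by simp only [D]; linarith [pow_pos hε 2])
  · rw [dist_eq_norm, dist_eq_norm, ← Real.sqrt_sq (norm_nonneg (x - y)), ← Real.sqrt_mul hθ]
    exact Real.le_sqrt_of_sq_le (hsq x y)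

theorem exists_forall_inner_nonneg_of_strongly_monotone [CompleteSpace E] {C : Set E}
    (hne : C.Nonempty) (hc : IsClosed C) (hcv : Convex ℝ C) {B : E → E} {K : NNReal} {ε : ℝ}
    (hε : 0 < ε) (hB : LipschitzWith K B) (hmono : ∀ x y, ε * ‖x - y‖ ^ 2 ≤ ⟪x - y, B x - B y⟫) :
    ∃ x ∈ C, ∀ y ∈ C, 0 ≤ ⟪y - x, B x⟫ := by
  obtain ⟨γ, hγ, c, hc1, hstep⟩ := exists_lipschitzWith_sub_smul_lt_one hε hB hmono
  choose P hPC hP using hcv.exists_mem_forall_inner_sub_nonpos hne hc.isComplete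
  have hPlip : LipschitzWith 1 P := LipschitzWith.of_dist_le_mul fun u v => by
    simpa [dist_eq_norm] using
      norm_sub_le_of_forall_inner_sub_nonpos (hPC u) (hPC v) (hP u) (hP v)
  have hmaps : Set.MapsTo (fun x => P (x - γ • B x)) C C := fun x _ => hPC _
  have hcontr : ContractingWith c (hmaps.restrict _ C C) :=
    ⟨hc1, ((one_mul c ▸ hPlip.comp hstep).lipschitzOnWith).mapsToRestrict hmaps⟩
  obtain ⟨x, hxC, hfix, -⟩ := hcontr.exists_fixedPoint' hc.isComplete hmaps hne.some_mem
    (edist_ne_top _ _)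
  refine ⟨x, hxC, fun y hy => ?_⟩
  have hproj := hP (x - γ • B x) y hy
  rw [show P (x - γ • B x) = x from hfix, sub_sub_cancel_left, inner_neg_left,
    real_inner_smul_left, real_inner_comm] at hproj
  nlinarith

theorem InnerProductSpace.surjective_inclusionInDoubleDual [CompleteSpace E] :
    Function.Surjective (NormedSpace.inclusionInDoubleDual ℝ E) := by
  intro φ
  refine ⟨(InnerProductSpace.toDual ℝ E).symm (φ.comp (innerSL ℝ)), ?_⟩
  ext f
  obtain ⟨y, rfl⟩ := (InnerProductSpace.toDual ℝ E).surjective f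
  rw [NormedSpace.dual_def, InnerProductSpace.toDual_apply_apply, real_inner_comm,
    InnerProductSpace.toDual_symm_apply]
  rfl

theorem Convex.isCompact_toWeakSpace_image [CompleteSpace E] {C : Set E}
    (hb : Bornology.IsBounded C) (hc : IsClosed C) (hcv : Convex ℝ C) :
    IsCompact (toWeakSpace ℝ E '' C) := by
  have hrange : Set.range (NormedSpace.inclusionInDoubleDualWeak ℝ E) = Set.univ := by
    refine Set.range_eq_univ.2 fun ψ => ?_
    obtain ⟨x, hx⟩ := InnerProductSpace.surjective_inclusionInDoubleDual (WeakDual.toStrongDual ψ)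
    exact ⟨toWeakSpace ℝ E x, congrArg StrongDual.toWeakDual hx⟩
  have := NormedSpace.isCompact_closure_of_isBounded ℝ E (toWeakSpace ℝ E '' C)
    (by rwa [(toWeakSpace ℝ E).injective.preimage_image]) (hrange ▸ Set.subset_univ _)
  rwa [← hcv.toWeakSpace_closure ℝ, hc.closure_eq] at this

theorem exists_mem_forall_inner_le_of_forall_pos [CompleteSpace E] {C : Set E}
    (hb : Bornology.IsBounded C) (hc : IsClosed C) (hcv : Convex ℝ C) {ι : Type*} (a : ι → E)
    (b : ι → ℝ) (h : ∀ δ > 0, ∃ x ∈ C, ∀ i, ⟪a i, x⟫ ≤ b i + δ) :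
    ∃ x ∈ C, ∀ i, ⟪a i, x⟫ ≤ b i := by
  set S : Set.Ioi (0 : ℝ) → Set E := fun δ => C ∩ ⋂ i, {x | ⟪a i, x⟫ ≤ b i + δ}
  have hScompact : ∀ δ, IsCompact (toWeakSpace ℝ E '' S δ) := fun δ =>
    Convex.isCompact_toWeakSpace_image (hb.subset Set.inter_subset_left)
      (hc.inter <| isClosed_iInter fun i => isClosed_le (by fun_prop) continuous_const)
      (hcv.inter <| convex_iInter fun i => convex_halfSpace_le (innerₗ E (a i)).isLinear _)
  have hSmono : Monotone S := fun δ₁ δ₂ hδ x ⟨hxC, hx⟩ =>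
    ⟨hxC, Set.mem_iInter.2 fun i => by
      have : ⟪a i, x⟫ ≤ b i + δ₁ := Set.mem_iInter.1 hx i
      exact le_trans this (by gcongr)⟩
  obtain ⟨w, hw⟩ := IsCompact.nonempty_iInter_of_directed_nonempty_isCompact_isClosed
    (fun δ => toWeakSpace ℝ E '' S δ)
    (fun δ₁ δ₂ => ⟨⟨min δ₁ δ₂, Set.mem_Ioi.2 (lt_min δ₁.2 δ₂.2)⟩,
      Set.image_mono (hSmono (min_le_left δ₁ δ₂)), Set.image_mono (hSmono (min_le_right δ₁ δ₂))⟩)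
    (fun δ => by
      obtain ⟨x, hxC, hx⟩ := h δ δ.2
      exact ⟨_, x, ⟨hxC, Set.mem_iInter.2 hx⟩, rfl⟩)
    hScompact fun δ => (hScompact δ).isClosed
  have hmem : ∀ δ, (toWeakSpace ℝ E).symm w ∈ S δ := fun δ => by
    obtain ⟨x, hx, rfl⟩ := Set.mem_iInter.1 hw δ
    simpa using hx
  exact ⟨_, (hmem ⟨1, Set.mem_Ioi.2 one_pos⟩).1, fun i => le_of_forall_pos_le_add fun δ hδ =>
    Set.mem_iInter.1 (hmem ⟨δ, hδ⟩).2 i⟩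

theorem exists_forall_inner_le_add_of_monotone [CompleteSpace E] {C : Set E} (hne : C.Nonempty)
    (hb : Bornology.IsBounded C) (hc : IsClosed C) (hcv : Convex ℝ C) {A : E → E} {K : NNReal}
    (hA : LipschitzWith K A) (hmono : ∀ x y, 0 ≤ ⟪x - y, A x - A y⟫) {δ : ℝ} (hδ : 0 < δ) :
    ∃ x ∈ C, ∀ y ∈ C, ⟪A y, x⟫ ≤ ⟪A y, y⟫ + δ := by
  obtain ⟨R, hR⟩ := hb.subset_closedBall 0
  have hnorm : ∀ y ∈ C, ‖y‖ ≤ R := fun y hy => by simpa using hR hy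
  set ε := δ / (R ^ 2 + 1)
  have hε : 0 < ε := by positivity
  obtain ⟨x, hxC, hx⟩ := exists_forall_inner_nonneg_of_strongly_monotone hne hc hcv hε
    (hA.add (lipschitzWith_smul ε)) fun x y => by
      rw [show A x + ε • x - (A y + ε • y) = (A x - A y) + ε • (x - y) by rw [smul_sub]; abel,
        inner_add_right, real_inner_smul_right, real_inner_self_eq_norm_sq]
      linarith [hmono x y]
  refine ⟨x, hxC, fun y hy => ?_⟩
  have hreg := hx y hy
  rw [inner_add_right, real_inner_smul_right] at hreg
  have hbound : ε * ⟪y - x, x⟫ ≤ δ := by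
    have : ⟪y - x, x⟫ ≤ R ^ 2 := by
      rw [inner_sub_left, real_inner_self_eq_norm_sq]
      nlinarith [real_inner_le_norm y x, hnorm y hy, hnorm x hxC, norm_nonneg x, norm_nonneg y]
    calc ε * ⟪y - x, x⟫ ≤ ε * (R ^ 2 + 1) := by gcongr; linarith
      _ = δ := div_mul_cancel₀ δ (by positivity)
  have hmono_yx : ⟪y - x, A x⟫ ≤ ⟪y - x, A y⟫ := by
    linarith [inner_sub_right (𝕜 := ℝ) (y - x) (A y) (A x), hmono y x]
  have hsplit : ⟪y - x, A y⟫ = ⟪A y, y⟫ - ⟪A y, x⟫ := by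
    rw [inner_sub_left, real_inner_comm, real_inner_comm x]
  linarith

theorem Convex.inner_nonneg_of_forall_inner_nonneg {C : Set E} (hcv : Convex ℝ C) {A : E → E}
    (hA : Continuous A) {x : E} (hx : x ∈ C) (h : ∀ y ∈ C, 0 ≤ ⟪y - x, A y⟫) {y : E} (hy : y ∈ C) :
    0 ≤ ⟪y - x, A x⟫ := by
  set g : ℝ → ℝ := fun t => ⟪y - x, A (x + t • (y - x))⟫
  have hg : Continuous g := by fun_prop
  have hpos : ∀ t ∈ Set.Ioc (0 : ℝ) 1, 0 ≤ g t := fun t ht => by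
    have hmem : x + t • (y - x) ∈ C := by
      simpa using hcv.add_smul_sub_mem hx hy ⟨ht.1.le, ht.2⟩
    have := h _ hmem
    rw [add_sub_cancel_left, real_inner_smul_left] at this
    exact nonneg_of_mul_nonneg_right (by simpa [mul_comm] using this) ht.1
  have : 0 ≤ g 0 := ge_of_tendsto (hg.tendsto 0 |>.mono_left nhdsWithin_le_nhds)
    (Filter.eventually_of_mem (Ioc_mem_nhdsGT zero_lt_one) hpos)
  simpa [g] using this

theorem exists_forall_inner_nonneg_of_monotone [CompleteSpace E] {C : Set E} (hne : C.Nonempty)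
    (hb : Bornology.IsBounded C) (hc : IsClosed C) (hcv : Convex ℝ C) {A : E → E} {K : NNReal}
    (hA : LipschitzWith K A) (hmono : ∀ x y, 0 ≤ ⟪x - y, A x - A y⟫) :
    ∃ x ∈ C, ∀ y ∈ C, 0 ≤ ⟪y - x, A x⟫ := by
  obtain ⟨x, hxC, hx⟩ := exists_mem_forall_inner_le_of_forall_pos hb hc hcv
    (fun y : C => A y) (fun y => ⟪A y, y⟫) fun δ hδ => by
      obtain ⟨x, hxC, hx⟩ := exists_forall_inner_le_add_of_monotone hne hb hc hcv hA hmono hδ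
      exact ⟨x, hxC, fun y => hx y y.2⟩
  have hminty : ∀ y ∈ C, 0 ≤ ⟪y - x, A y⟫ := fun y hy => by
    rw [inner_sub_left, real_inner_comm (A y) y, real_inner_comm (A y) x, sub_nonneg]
    exact hx ⟨y, hy⟩
  exact ⟨x, hxC, fun y hy => hcv.inner_nonneg_of_forall_inner_nonneg hA.continuous hxC hminty hy⟩

theorem lipschitzWith_one_of_norm_sq_le_inner {F : E → E}
    (hF : ∀ u v, ‖F u - F v‖ ^ 2 ≤ ⟪u - v, F u - F v⟫) : LipschitzWith 1 F :=
  LipschitzWith.of_dist_le_mul fun u v => by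
    rw [dist_eq_norm, dist_eq_norm, NNReal.coe_one, one_mul]
    nlinarith [hF u v, real_inner_le_norm (u - v) (F u - F v), norm_nonneg (F u - F v),
      norm_nonneg (u - v)]

end Hilbert

section RelaxedOperator

variable {H : Type*} [NormedAddCommGroup H] [InnerProductSpace ℝ H] [CompleteSpace H]
  {I : Type*} [Fintype I] {G : I → Type*} [∀ i, NormedAddCommGroup (G i)]
  [∀ i, InnerProductSpace ℝ (G i)] [∀ i, CompleteSpace (G i)]
  (ω : I → ℝ) (L : ∀ i, H →L[ℝ] G i) (F : ∀ i, G i → G i) (p : ∀ i, G i)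

/-- The relaxed problem is the variational inequality of this operator on `C`. -/
noncomputable def relaxedOperator (x : H) : H :=
  ∑ i, ω i • (L i).adjoint (F i (L i x) - p i)

theorem inner_relaxedOperator (x y : H) :
    ⟪y, relaxedOperator ω L F p x⟫ = ∑ i, ω i * ⟪L i y, F i (L i x) - p i⟫ := by
  simp only [relaxedOperator, inner_sum, real_inner_smul_right,
    ContinuousLinearMap.adjoint_inner_right]

theorem relaxedOperator_sub (x y : H) :
    relaxedOperator ω L F p x - relaxedOperator ω L F p y =
      ∑ i, ω i • (L i).adjoint (F i (L i x) - F i (L i y)) := by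
  simp only [relaxedOperator, ← Finset.sum_sub_distrib, ← smul_sub, ← map_sub,
    sub_sub_sub_cancel_right]

theorem relaxedOperator_monotone (hω : ∀ i, 0 ≤ ω i)
    (hF : ∀ i, ∀ u v, 0 ≤ ⟪u - v, F i u - F i v⟫) (x y : H) :
    0 ≤ ⟪x - y, relaxedOperator ω L F p x - relaxedOperator ω L F p y⟫ := by
  rw [relaxedOperator_sub, inner_sum]
  refine Finset.sum_nonneg fun i _ => ?_
  rw [real_inner_smul_right, ContinuousLinearMap.adjoint_inner_right, map_sub]
  exact mul_nonneg (hω i) (hF i _ _)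

theorem lipschitzWith_relaxedOperator (hω : ∀ i, 0 ≤ ω i) (hF : ∀ i, LipschitzWith 1 (F i)) :
    LipschitzWith (∑ i, ω i * ‖L i‖ ^ 2).toNNReal (relaxedOperator ω L F p) := by
  refine LipschitzWith.of_dist_le' fun x y => ?_
  rw [dist_eq_norm, dist_eq_norm, relaxedOperator_sub, Finset.sum_mul]
  refine (norm_sum_le _ _).trans (Finset.sum_le_sum fun i _ => ?_)
  have hFi : ‖F i (L i x) - F i (L i y)‖ ≤ ‖L i‖ * ‖x - y‖ :=
    calc ‖F i (L i x) - F i (L i y)‖ ≤ ‖L i x - L i y‖ := by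
          simpa [dist_eq_norm] using (hF i).dist_le_mul (L i x) (L i y)
      _ ≤ ‖L i‖ * ‖x - y‖ := by rw [← map_sub]; exact (L i).le_opNorm _
  calc ‖ω i • (L i).adjoint (F i (L i x) - F i (L i y))‖
      ≤ ω i * (‖L i‖ * ‖F i (L i x) - F i (L i y)‖) := by
        rw [norm_smul, Real.norm_of_nonneg (hω i), ← ContinuousLinearMap.adjoint.norm_map (L i)]
        exact mul_le_mul_of_nonneg_left ((L i).adjoint.le_opNorm _) (hω i)
    _ ≤ ω i * (‖L i‖ * (‖L i‖ * ‖x - y‖)) := by have := hω i; gcongr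
    _ = ω i * ‖L i‖ ^ 2 * ‖x - y‖ := by ring

end RelaxedOperator

theorem relaxed_has_solution_of_bounded_general
    {H : Type*} [NormedAddCommGroup H] [InnerProductSpace ℝ H] [CompleteSpace H]
    {I : Type*} [Fintype I]
    (G : I → Type*) [∀ i, NormedAddCommGroup (G i)] [∀ i, InnerProductSpace ℝ (G i)]
    [∀ i, CompleteSpace (G i)]
    (ω : I → ℝ) (hω : ∀ i, ω i ∈ Set.Ioo (0 : ℝ) 1)
    (C : Set H) (hCne : C.Nonempty) (hCcl : IsClosed C) (hCcv : Convex ℝ C)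
    (p : ∀ i, G i) (L : ∀ i, H →L[ℝ] G i)
    (F : ∀ i, G i → G i)
    (hF : ∀ i, ∀ u v : G i, ⟪u - v, F i u - F i v⟫ ≥ ‖F i u - F i v‖ ^ 2)
    (hCbdd : Bornology.IsBounded C) :
    ∃ x ∈ C, ∀ y ∈ C, (∑ i, ω i * ⟪L i (y - x), F i (L i x) - p i⟫) ≥ 0 := by
  have hω₀ : ∀ i, 0 ≤ ω i := fun i => (hω i).1.le
  obtain ⟨x, hxC, hx⟩ := exists_forall_inner_nonneg_of_monotone hCne hCbdd hCcl hCcv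
    (lipschitzWith_relaxedOperator ω L F p hω₀ fun i =>
      lipschitzWith_one_of_norm_sq_le_inner (hF i))
    (relaxedOperator_monotone ω L F p hω₀ fun i u v => (sq_nonneg _).trans (hF i u v))
  exact ⟨x, hxC, fun y hy => inner_relaxedOperator ω L F p x (y - x) ▸ hx y hy⟩

/-- If `C` is bounded, the relaxed variational inequality problem has a solution. -/
theorem relaxed_has_solution_of_bounded
    {H : Type*} [NormedAddCommGroup H] [InnerProductSpace ℝ H] [CompleteSpace H]
    {I : Type*} [Fintype I] [Nonempty I]
    (G : I → Type*) [∀ i, NormedAddCommGroup (G i)] [∀ i, InnerProductSpace ℝ (G i)]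
    [∀ i, CompleteSpace (G i)]
    (ω : I → ℝ) (hω : ∀ i, ω i ∈ Set.Ioo (0 : ℝ) 1) (hωsum : ∑ i, ω i = 1)
    (C : Set H) (hCne : C.Nonempty) (hCcl : IsClosed C) (hCcv : Convex ℝ C)
    (p : ∀ i, G i) (L : ∀ i, H →L[ℝ] G i) (hL : ∀ i, L i ≠ 0)
    (F : ∀ i, G i → G i)
    (hF : ∀ i, ∀ u v : G i, ⟪u - v, F i u - F i v⟫ ≥ ‖F i u - F i v‖ ^ 2)
    (hCbdd : Bornology.IsBounded C) :
    ∃ x ∈ C, ∀ y ∈ C, (∑ i, ω i * ⟪L i (y - x), F i (L i x) - p i⟫) ≥ 0 :=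
  relaxed_has_solution_of_bounded_general G ω hω C hCne hCcl hCcv p L F hF hCbdd
end

section
/- Suppose that for some i ∈ I the adjoint L_i* : G_i → H is surjective and F_i is coercive in the sense that ‖F_i y‖ → +∞ as ‖y‖ → +∞. Then the relaxed problem has a solution: there exists x ∈ C such that Σ_{j∈I} ω_j ⟪L_j(y − x), F_j(L_j x) − p_j⟫ ≥ 0 for every y ∈ C. -/
open RealInnerProductSpace Pointwise Filter

set_option maxHeartbeats 8000000

section AuxRelaxedVI

variable {E : Type*} [NormedAddCommGroup E] [InnerProductSpace ℝ E]

/-- A firmly nonexpansive map is nonexpansive. -/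
lemma RelaxedVI.nonexpansive_of_firm {F : E → E}
    (hF : ∀ u v : E, ⟪u - v, F u - F v⟫ ≥ ‖F u - F v‖ ^ 2) :
    ∀ u v : E, ‖F u - F v‖ ≤ ‖u - v‖ := by
  intro u v
  rcases eq_or_lt_of_le (norm_nonneg (F u - F v)) with h | h
  · rw [← h]; exact norm_nonneg _
  · have h1 := hF u v
    have h2 : ⟪u - v, F u - F v⟫ ≤ ‖u - v‖ * ‖F u - F v‖ := real_inner_le_norm _ _
    nlinarith

/-- Metric projection onto a nonempty closed convex set, with its variational
characterization. -/
lemma RelaxedVI.exists_proj [CompleteSpace E] (C : Set E) (hne : C.Nonempty)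
    (hcl : IsClosed C) (hcv : Convex ℝ C) :
    ∃ P : E → E, ∀ x : E, P x ∈ C ∧ ∀ y ∈ C, ⟪x - P x, y - P x⟫ ≤ 0 := by
  have key : ∀ x : E, ∃ z, z ∈ C ∧ ∀ y ∈ C, ⟪x - z, y - z⟫ ≤ 0 := by
    intro x
    obtain ⟨v, hvC, hv⟩ := exists_norm_eq_iInf_of_complete_convex hne hcl.isComplete hcv x
    exact ⟨v, hvC, (norm_eq_iInf_iff_real_inner_le_zero hcv hvC).1 hv⟩
  choose P h1 h2 using key
  exact ⟨P, fun x => ⟨h1 x, h2 x⟩⟩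

/-- Solvability of the regularized variational inequality for a monotone Lipschitz operator. -/
lemma RelaxedVI.exists_reg_VI [CompleteSpace E] (C : Set E) (hne : C.Nonempty)
    (hcl : IsClosed C) (hcv : Convex ℝ C)
    (B : E → E) (K : ℝ) (hK : 0 ≤ K)
    (hmono : ∀ x y : E, 0 ≤ ⟪x - y, B x - B y⟫)
    (hlip : ∀ x y : E, ‖B x - B y‖ ≤ K * ‖x - y‖)
    (ε : ℝ) (hε : 0 < ε) :
    ∃ x ∈ C, ∀ y ∈ C, 0 ≤ ⟪y - x, B x + ε • x⟫ := by
  obtain ⟨P, hP⟩ := RelaxedVI.exists_proj C hne hcl hcv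
  -- the projection is nonexpansive
  have hPne : ∀ a b : E, ‖P a - P b‖ ≤ ‖a - b‖ := by
    intro a b
    have h1 := (hP a).2 (P b) (hP b).1
    have h2 := (hP b).2 (P a) (hP a).1
    have key : ‖P a - P b‖ ^ 2 ≤ ⟪a - b, P a - P b⟫ := by
      have e1 : ⟪a - P a, P a - P b⟫ = - ⟪a - P a, P b - P a⟫ := by
        rw [show P a - P b = -(P b - P a) by abel, inner_neg_right]
      have e2 : ⟪(a - b) - (P a - P b), P a - P b⟫
          = ⟪a - P a, P a - P b⟫ - ⟪b - P b, P a - P b⟫ := by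
        rw [show (a - b) - (P a - P b) = (a - P a) - (b - P b) by abel, inner_sub_left]
      have e3 : ⟪(a - b) - (P a - P b), P a - P b⟫
          = ⟪a - b, P a - P b⟫ - ‖P a - P b‖ ^ 2 := by
        rw [inner_sub_left, real_inner_self_eq_norm_sq]
      linarith [e1 ▸ e2, e3]
    have h3 : ⟪a - b, P a - P b⟫ ≤ ‖a - b‖ * ‖P a - P b‖ := real_inner_le_norm _ _
    rcases eq_or_lt_of_le (norm_nonneg (P a - P b)) with h | h
    · rw [← h]; exact norm_nonneg _
    · nlinarith
  set Bε : E → E := fun x => B x + ε • x with hBε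
  have hKε : 0 < K + ε := by linarith
  set γ : ℝ := ε / (K + ε) ^ 2 with hγ
  have hγpos : 0 < γ := by positivity
  have hγε : γ * (K + ε) ^ 2 = ε := by rw [hγ, div_mul_cancel₀ _ (pow_ne_zero 2 hKε.ne')]
  have hγε1 : γ * ε ≤ 1 := by
    rw [hγ]
    rw [div_mul_eq_mul_div, div_le_one (by positivity)]
    nlinarith
  -- strong monotonicity and Lipschitz of Bε
  have hsm : ∀ a b : E, ε * ‖a - b‖ ^ 2 ≤ ⟪a - b, Bε a - Bε b⟫ := by
    intro a b
    have e : Bε a - Bε b = (B a - B b) + ε • (a - b) := by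
      simp only [hBε]; rw [smul_sub]; abel
    rw [e, inner_add_right, real_inner_smul_right, real_inner_self_eq_norm_sq]
    have := hmono a b
    linarith
  have hsl : ∀ a b : E, ‖Bε a - Bε b‖ ≤ (K + ε) * ‖a - b‖ := by
    intro a b
    have e : Bε a - Bε b = (B a - B b) + ε • (a - b) := by
      simp only [hBε]; rw [smul_sub]; abel
    rw [e]
    calc ‖(B a - B b) + ε • (a - b)‖ ≤ ‖B a - B b‖ + ‖ε • (a - b)‖ := norm_add_le _ _
      _ ≤ K * ‖a - b‖ + ε * ‖a - b‖ := by
          rw [norm_smul, Real.norm_eq_abs, abs_of_pos hε]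
          exact add_le_add (hlip a b) le_rfl
      _ = (K + ε) * ‖a - b‖ := by ring
  -- contraction estimate
  have hcontr : ∀ a b : E,
      ‖(a - γ • Bε a) - (b - γ • Bε b)‖ ≤ Real.sqrt (1 - γ * ε) * ‖a - b‖ := by
    intro a b
    have e : (a - γ • Bε a) - (b - γ • Bε b) = (a - b) - γ • (Bε a - Bε b) := by
      rw [smul_sub]; abel
    have hsq : ‖(a - b) - γ • (Bε a - Bε b)‖ ^ 2 ≤ (1 - γ * ε) * ‖a - b‖ ^ 2 := by
      rw [norm_sub_sq_real, real_inner_smul_right, norm_smul, Real.norm_eq_abs,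
        abs_of_pos hγpos, mul_pow]
      have h1 := hsm a b
      have h2 : ‖Bε a - Bε b‖ ^ 2 ≤ ((K + ε) * ‖a - b‖) ^ 2 := by
        have := hsl a b
        nlinarith [norm_nonneg (Bε a - Bε b)]
      have h3 : γ ^ 2 * ‖Bε a - Bε b‖ ^ 2 ≤ γ * ε * ‖a - b‖ ^ 2 := by
        calc γ ^ 2 * ‖Bε a - Bε b‖ ^ 2 ≤ γ ^ 2 * ((K + ε) * ‖a - b‖) ^ 2 := by nlinarith
          _ = γ * (γ * (K + ε) ^ 2) * ‖a - b‖ ^ 2 := by ring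
          _ = γ * ε * ‖a - b‖ ^ 2 := by rw [hγε]
      nlinarith
    rw [e]
    have h0 : (0:ℝ) ≤ 1 - γ * ε := by linarith
    calc ‖(a - b) - γ • (Bε a - Bε b)‖
        = Real.sqrt (‖(a - b) - γ • (Bε a - Bε b)‖ ^ 2) := by
          rw [Real.sqrt_sq (norm_nonneg _)]
      _ ≤ Real.sqrt ((1 - γ * ε) * ‖a - b‖ ^ 2) := Real.sqrt_le_sqrt hsq
      _ = Real.sqrt (1 - γ * ε) * ‖a - b‖ := by
          rw [Real.sqrt_mul h0, Real.sqrt_sq (norm_nonneg _)]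
  -- set up the fixed point
  haveI : Nonempty C := hne.to_subtype
  haveI : CompleteSpace C := hcl.completeSpace_coe
  set κ : ℝ := Real.sqrt (1 - γ * ε) with hκ
  have hκ0 : 0 ≤ κ := Real.sqrt_nonneg _
  have hκ1 : κ < 1 := by
    have : Real.sqrt (1 - γ * ε) < Real.sqrt 1 := by
      apply Real.sqrt_lt_sqrt (by linarith)
      nlinarith
    rwa [Real.sqrt_one] at this
  set Φ : C → C := fun c => ⟨P ((c : E) - γ • Bε c), (hP _).1⟩ with hΦ
  have hlipΦ : LipschitzWith κ.toNNReal Φ := by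
    apply LipschitzWith.of_dist_le_mul
    intro a b
    rw [Subtype.dist_eq, Subtype.dist_eq, dist_eq_norm, dist_eq_norm, Real.coe_toNNReal κ hκ0]
    calc ‖P ((a : E) - γ • Bε a) - P ((b : E) - γ • Bε b)‖
        ≤ ‖((a : E) - γ • Bε a) - ((b : E) - γ • Bε b)‖ := hPne _ _
      _ ≤ κ * ‖(a : E) - b‖ := hcontr _ _
  have hcw : ContractingWith κ.toNNReal Φ := by
    constructor
    · rwa [← NNReal.coe_lt_one, Real.coe_toNNReal κ hκ0]
    · exact hlipΦ
  set x : C := hcw.fixedPoint Φ with hx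
  have hfix : Φ x = x := hcw.fixedPoint_isFixedPt
  refine ⟨(x : E), x.2, ?_⟩
  intro y hy
  have hfix' : P ((x : E) - γ • Bε x) = (x : E) := congrArg Subtype.val hfix
  have hchar := (hP ((x : E) - γ • Bε x)).2 y hy
  rw [hfix'] at hchar
  have e : ((x : E) - γ • Bε x) - (x : E) = -(γ • Bε x) := by abel
  rw [e, inner_neg_left, real_inner_smul_left] at hchar
  have : 0 ≤ γ * ⟪Bε (x : E), y - (x : E)⟫ := by linarith
  have h2 : 0 ≤ ⟪Bε (x : E), y - (x : E)⟫ := (mul_nonneg_iff_of_pos_left hγpos).1 this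
  rw [real_inner_comm] at h2
  exact h2

end AuxRelaxedVI


section AuxRelaxedVI2

variable {E : Type*} [NormedAddCommGroup E] [InnerProductSpace ℝ E]

/-- A firmly nonexpansive coercive operator has dense range. -/
lemma RelaxedVI.approx_surj [CompleteSpace E] {F : E → E}
    (hF : ∀ u v : E, ⟪u - v, F u - F v⟫ ≥ ‖F u - F v‖ ^ 2)
    (hc : ∀ M : ℝ, ∃ R : ℝ, ∀ v : E, R ≤ ‖v‖ → M ≤ ‖F v‖)
    (y : E) {δ : ℝ} (hδ : 0 < δ) : ∃ v : E, ‖F v - y‖ ≤ δ := by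
  set c0 : ℝ := 2 * ‖y - F 0‖ with hc0
  have hc0n : 0 ≤ c0 := by positivity
  obtain ⟨R0, hR0⟩ := hc (‖y‖ + c0 + 1)
  set R : ℝ := max R0 1 with hR
  have hR1 : (1:ℝ) ≤ R := le_max_right _ _
  set s : ℝ := min (1/2) (δ / (2 * (R + 1))) with hs
  have hspos : 0 < s := by
    apply lt_min (by norm_num)
    positivity
  have hshalf : s ≤ 1/2 := min_le_left _ _
  have hsδ : s ≤ δ / (2 * (R + 1)) := min_le_right _ _
  set t : ℝ := 1 - s with ht
  have ht2 : 1/2 ≤ t := by simp only [ht]; linarith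
  have ht1 : t < 1 := by simp only [ht]; linarith
  have htpos : 0 < t := by linarith
  set S : E → E := fun v => t • ((2:ℝ) • (y - F v) + v) with hS
  -- S is a contraction with ratio t
  have hSlip : ∀ a b : E, ‖S a - S b‖ ≤ t * ‖a - b‖ := by
    intro a b
    have e : S a - S b = t • ((a - b) - (2:ℝ) • (F a - F b)) := by
      simp only [hS]
      rw [← smul_sub]
      congr 1
      module
    rw [e, norm_smul, Real.norm_eq_abs, abs_of_pos htpos]
    have hsq : ‖(a - b) - (2:ℝ) • (F a - F b)‖ ^ 2 ≤ ‖a - b‖ ^ 2 := by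
      rw [norm_sub_sq_real, real_inner_smul_right, norm_smul]
      have h := hF a b
      simp only [Real.norm_ofNat]
      nlinarith
    have : ‖(a - b) - (2:ℝ) • (F a - F b)‖ ≤ ‖a - b‖ := by
      nlinarith [norm_nonneg ((a - b) - (2:ℝ) • (F a - F b)), norm_nonneg (a - b)]
    nlinarith [norm_nonneg ((a - b) - (2:ℝ) • (F a - F b))]
  have hcw : ContractingWith t.toNNReal S := by
    constructor
    · rwa [← NNReal.coe_lt_one, Real.coe_toNNReal t htpos.le]
    · apply LipschitzWith.of_dist_le_mul
      intro a b
      rw [dist_eq_norm, dist_eq_norm, Real.coe_toNNReal t htpos.le]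
      exact hSlip a b
  haveI : Nonempty E := ⟨0⟩
  set v : E := hcw.fixedPoint S with hv
  have hfix : S v = v := hcw.fixedPoint_isFixedPt
  -- identity : F v - y = -((1-t)/(2*t)) • v
  have hid : y - F v = ((1 - t) / (2 * t)) • v := by
    have hfix' : t • ((2:ℝ) • (y - F v) + v) = v := hfix
    have h1 : (t * 2) • (y - F v) + t • v = v := by
      rw [mul_smul, ← smul_add]
      exact hfix'
    have h2 : (t * 2) • (y - F v) = (1 - t) • v := by
      have h2' : (t * 2) • (y - F v) = v - t • v := by
        rw [eq_sub_iff_add_eq]; exact h1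
      rw [h2']; module
    have h3 : ((t * 2)⁻¹ * (t * 2)) • (y - F v) = ((t * 2)⁻¹ * (1 - t)) • v := by
      rw [mul_smul ((t * 2)⁻¹) (t * 2) (y - F v), mul_smul ((t * 2)⁻¹) (1 - t) v, h2]
    rw [inv_mul_cancel₀ (by positivity), one_smul] at h3
    rw [h3]
    congr 1
    rw [div_eq_mul_inv]
    rw [show (2:ℝ) * t = t * 2 by ring]
    ring
  have hnid : ‖F v - y‖ = (1 - t) / (2 * t) * ‖v‖ := by
    rw [← norm_neg, neg_sub, hid, norm_smul, Real.norm_eq_abs, abs_of_nonneg (div_nonneg (by linarith) (by positivity))]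
  -- bound on v
  have hvb : (1 - t) * ‖v‖ ≤ c0 := by
    have h1 : ‖v - S 0‖ = ‖S v - S 0‖ := by rw [hfix]
    have h2 : ‖S v - S 0‖ ≤ t * ‖v - 0‖ := hSlip v 0
    have h3 : ‖S 0‖ ≤ c0 := by
      simp only [hS, add_zero]
      rw [norm_smul, norm_smul, Real.norm_eq_abs, Real.norm_ofNat, abs_of_pos htpos]
      calc t * (2 * ‖y - F 0‖) ≤ 1 * (2 * ‖y - F 0‖) := by
            apply mul_le_mul_of_nonneg_right ht1.le (by positivity)
        _ = c0 := by rw [hc0]; ring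
    have h4 : ‖v‖ ≤ ‖v - S 0‖ + ‖S 0‖ := by
      calc ‖v‖ = ‖(v - S 0) + S 0‖ := by congr 1; abel
        _ ≤ ‖v - S 0‖ + ‖S 0‖ := norm_add_le _ _
    rw [sub_zero] at h2
    rw [h1] at h4
    nlinarith
  -- F v is not too large
  have hFvb : ‖F v‖ ≤ ‖y‖ + c0 := by
    have h1 : ‖F v‖ ≤ ‖F v - y‖ + ‖y‖ := by
      calc ‖F v‖ = ‖(F v - y) + y‖ := by congr 1; abel
        _ ≤ ‖F v - y‖ + ‖y‖ := norm_add_le _ _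
    have h2 : (1 - t) / (2 * t) * ‖v‖ ≤ c0 := by
      have e : (1 - t) / (2 * t) * ‖v‖ = ((1 - t) * ‖v‖) / (2 * t) := by ring
      rw [e]
      apply div_le_of_le_mul₀ (by positivity) hc0n
      nlinarith
    rw [hnid] at h1
    linarith
  -- hence v is bounded by R
  have hvR : ‖v‖ ≤ R := by
    by_contra hcon
    push_neg at hcon
    have : R0 ≤ ‖v‖ := le_trans (le_max_left _ _) hcon.le
    have := hR0 v this
    linarith
  -- conclude
  refine ⟨v, ?_⟩
  rw [hnid]
  have h1 : (1 - t) / (2 * t) ≤ s := by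
    rw [ht]
    rw [div_le_iff₀ (by positivity)]
    nlinarith
  calc (1 - t) / (2 * t) * ‖v‖ ≤ s * R := by
        apply mul_le_mul h1 hvR (norm_nonneg _) hspos.le
    _ ≤ δ / (2 * (R + 1)) * R := by
        apply mul_le_mul_of_nonneg_right hsδ (by linarith)
    _ ≤ δ := by
        rw [div_mul_eq_mul_div, div_le_iff₀ (by positivity)]
        nlinarith

/-- Weak cluster point of a bounded sequence in a Hilbert space, along an ultrafilter. -/
lemma RelaxedVI.exists_weak_cluster [CompleteSpace E] (x : ℕ → E) (M : ℝ)
    (hM : ∀ n, ‖x n‖ ≤ M) :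
    ∃ (U : Ultrafilter ℕ) (z : E), (U : Filter ℕ) ≤ atTop ∧
      ∀ w : E, Tendsto (fun n => ⟪x n, w⟫) (U : Filter ℕ) (nhds ⟪z, w⟫) := by
  have hM0 : 0 ≤ M := le_trans (norm_nonneg (x 0)) (hM 0)
  set U : Ultrafilter ℕ := Ultrafilter.of atTop with hU
  have hUle : (U : Filter ℕ) ≤ atTop := Ultrafilter.of_le _
  have hlim : ∀ w : E, ∃ a : ℝ, Tendsto (fun n => ⟪x n, w⟫) (U : Filter ℕ) (nhds a) := by
    intro w
    set f : ℕ → ℝ := fun n => ⟪x n, w⟫ with hf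
    have hfb : ∀ n, f n ∈ Set.Icc (-(M * ‖w‖)) (M * ‖w‖) := by
      intro n
      have h1 : |f n| ≤ M * ‖w‖ := by
        calc |f n| ≤ ‖x n‖ * ‖w‖ := abs_real_inner_le_norm _ _
          _ ≤ M * ‖w‖ := mul_le_mul_of_nonneg_right (hM n) (norm_nonneg _)
      exact abs_le.1 h1
    have hle : (Ultrafilter.map f U : Filter ℝ) ≤ Filter.principal (Set.Icc (-(M * ‖w‖)) (M * ‖w‖)) := by
      rw [Ultrafilter.coe_map, Filter.le_principal_iff, Filter.mem_map]
      exact Filter.univ_mem' hfb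
    obtain ⟨a, _, ha⟩ := isCompact_Icc.ultrafilter_le_nhds (Ultrafilter.map f U) hle
    refine ⟨a, ?_⟩
    rwa [Ultrafilter.coe_map] at ha
  choose φ hφ using hlim
  haveI : (U : Filter ℕ).NeBot := U.neBot
  have hadd : ∀ w w' : E, φ (w + w') = φ w + φ w' := by
    intro w w'
    have h1 : Tendsto (fun n => ⟪x n, w + w'⟫) (U : Filter ℕ) (nhds (φ w + φ w')) := by
      have := (hφ w).add (hφ w')
      simpa only [← inner_add_right] using this
    exact tendsto_nhds_unique (hφ (w + w')) h1
  have hsmul : ∀ (c : ℝ) (w : E), φ (c • w) = c * φ w := by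
    intro c w
    have h1 : Tendsto (fun n => ⟪x n, c • w⟫) (U : Filter ℕ) (nhds (c * φ w)) := by
      have := (hφ w).const_mul c
      simpa only [← real_inner_smul_right] using this
    exact tendsto_nhds_unique (hφ (c • w)) h1
  have hbd : ∀ w : E, ‖φ w‖ ≤ M * ‖w‖ := by
    intro w
    rw [Real.norm_eq_abs]
    apply le_of_tendsto (hφ w).abs
    apply Filter.Eventually.of_forall
    intro n
    calc |⟪x n, w⟫| ≤ ‖x n‖ * ‖w‖ := abs_real_inner_le_norm _ _
      _ ≤ M * ‖w‖ := mul_le_mul_of_nonneg_right (hM n) (norm_nonneg _)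
  set Lmap : E →ₗ[ℝ] ℝ :=
    { toFun := φ
      map_add' := hadd
      map_smul' := hsmul } with hLmap
  set Lcont : E →L[ℝ] ℝ := Lmap.mkContinuous M (fun w => hbd w) with hLcont
  set z : E := (InnerProductSpace.toDual ℝ E).symm Lcont with hz
  have hzw : ∀ w : E, ⟪z, w⟫ = φ w := by
    intro w
    rw [hz]
    exact InnerProductSpace.toDual_symm_apply
  refine ⟨U, z, hUle, fun w => ?_⟩
  rw [hzw w]
  exact hφ w

end AuxRelaxedVI2


/-- If for some `i`, `Lᵢ*` is surjective and `‖Fᵢ y‖ → +∞` as `‖y‖ → +∞`, the relaxed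
variational inequality problem has a solution. -/
theorem relaxed_has_solution_of_coercive
    {H : Type*} [NormedAddCommGroup H] [InnerProductSpace ℝ H] [CompleteSpace H]
    {I : Type*} [Fintype I] [Nonempty I]
    (G : I → Type*) [∀ i, NormedAddCommGroup (G i)] [∀ i, InnerProductSpace ℝ (G i)]
    [∀ i, CompleteSpace (G i)]
    (ω : I → ℝ) (hω : ∀ i, ω i ∈ Set.Ioo (0 : ℝ) 1) (hωsum : ∑ i, ω i = 1)
    (C : Set H) (hCne : C.Nonempty) (hCcl : IsClosed C) (hCcv : Convex ℝ C)
    (p : ∀ i, G i) (L : ∀ i, H →L[ℝ] G i) (hL : ∀ i, L i ≠ 0)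
    (F : ∀ i, G i → G i)
    (hF : ∀ i, ∀ u v : G i, ⟪u - v, F i u - F i v⟫ ≥ ‖F i u - F i v‖ ^ 2)
    (i : I) (hadj : Function.Surjective (ContinuousLinearMap.adjoint (L i)))
    (hFcoer : Filter.Tendsto (fun y : G i => ‖F i y‖)
      (Filter.comap (fun y : G i => ‖y‖) Filter.atTop) Filter.atTop) :
    ∃ x ∈ C, ∀ y ∈ C, (∑ i, ω i * ⟪L i (y - x), F i (L i x) - p i⟫) ≥ 0 := by
  classical
  obtain ⟨x0, hx0⟩ := hCne
  -- restated coercivity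
  have hcoer' : ∀ M : ℝ, ∃ R : ℝ, ∀ v : G i, R ≤ ‖v‖ → M ≤ ‖F i v‖ := by
    intro Mv
    have h := (Filter.tendsto_atTop.1 hFcoer) Mv
    rw [Filter.eventually_comap, Filter.eventually_atTop] at h
    obtain ⟨R, hR⟩ := h
    exact ⟨R, fun v hv => hR ‖v‖ hv v rfl⟩
  -- L i is bounded below
  obtain ⟨Cs, hCs, hCsurj⟩ := ContinuousLinearMap.exists_preimage_norm_le _ hadj
  have hLb : ∀ x : H, ‖x‖ ≤ Cs * ‖L i x‖ := by
    intro x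
    obtain ⟨u, hu1, hu2⟩ := hCsurj x
    have h1 := ContinuousLinearMap.adjoint_inner_left (L i) x u
    rw [hu1, real_inner_self_eq_norm_sq] at h1
    have h2 : ⟪u, L i x⟫ ≤ ‖u‖ * ‖L i x‖ := real_inner_le_norm _ _
    have h3 : ‖u‖ * ‖L i x‖ ≤ Cs * ‖x‖ * ‖L i x‖ :=
      mul_le_mul_of_nonneg_right hu2 (norm_nonneg _)
    rcases (norm_nonneg x).eq_or_lt with h | h
    · rw [← h]; positivity
    · nlinarith
  -- the operator A
  set A : H → H := fun x => ∑ j, ω j • (ContinuousLinearMap.adjoint (L j)) (F j (L j x) - p j)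
    with hA
  have hinner : ∀ w x : H, ⟪w, A x⟫ = ∑ j, ω j * ⟪L j w, F j (L j x) - p j⟫ := by
    intro w x
    rw [hA]
    rw [inner_sum]
    apply Finset.sum_congr rfl
    intro j _
    rw [real_inner_smul_right, ContinuousLinearMap.adjoint_inner_right]
  have hmono : ∀ x y : H, 0 ≤ ⟪x - y, A x - A y⟫ := by
    intro x y
    rw [inner_sub_right, hinner, hinner, ← Finset.sum_sub_distrib]
    apply Finset.sum_nonneg
    intro j _
    rw [← mul_sub, ← inner_sub_right,
      show (F j (L j x) - p j) - (F j (L j y) - p j) = F j (L j x) - F j (L j y) by abel]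
    apply mul_nonneg (hω j).1.le
    rw [map_sub]
    exact le_trans (sq_nonneg _) (hF j _ _)
  have hFne : ∀ (j : I) (u v : G j), ‖F j u - F j v‖ ≤ ‖u - v‖ :=
    fun j => RelaxedVI.nonexpansive_of_firm (hF j)
  obtain ⟨K, hKdef⟩ : ∃ K : ℝ, K = ∑ j, ω j * ‖L j‖ ^ 2 := ⟨_, rfl⟩
  have hK0 : 0 ≤ K := by
    rw [hKdef]
    exact Finset.sum_nonneg fun j _ => mul_nonneg (hω j).1.le (sq_nonneg _)
  have hlip : ∀ x y : H, ‖A x - A y‖ ≤ K * ‖x - y‖ := by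
    intro x y
    have e : A x - A y
        = ∑ j, ω j • (ContinuousLinearMap.adjoint (L j)) (F j (L j x) - F j (L j y)) := by
      rw [hA, ← Finset.sum_sub_distrib]
      apply Finset.sum_congr rfl
      intro j _
      rw [← smul_sub, ← map_sub,
        show (F j (L j x) - p j) - (F j (L j y) - p j) = F j (L j x) - F j (L j y) by abel]
    rw [e]
    calc ‖∑ j, ω j • (ContinuousLinearMap.adjoint (L j)) (F j (L j x) - F j (L j y))‖
        ≤ ∑ j, ‖ω j • (ContinuousLinearMap.adjoint (L j)) (F j (L j x) - F j (L j y))‖ :=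
          norm_sum_le _ _
      _ ≤ ∑ j, ω j * ‖L j‖ ^ 2 * ‖x - y‖ := by
          apply Finset.sum_le_sum
          intro j _
          rw [norm_smul, Real.norm_eq_abs, abs_of_pos (hω j).1]
          have hadjn : ‖(ContinuousLinearMap.adjoint (L j) : G j →L[ℝ] H)‖ = ‖L j‖ :=
            ContinuousLinearMap.adjoint.norm_map (L j)
          have h1 : ‖(ContinuousLinearMap.adjoint (L j)) (F j (L j x) - F j (L j y))‖
              ≤ ‖L j‖ * ‖F j (L j x) - F j (L j y)‖ := by
            have := (ContinuousLinearMap.adjoint (L j)).le_opNorm (F j (L j x) - F j (L j y))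
            rwa [hadjn] at this
          have h2 : ‖F j (L j x) - F j (L j y)‖ ≤ ‖L j‖ * ‖x - y‖ := by
            calc ‖F j (L j x) - F j (L j y)‖ ≤ ‖L j x - L j y‖ := hFne j _ _
              _ = ‖L j (x - y)‖ := by rw [map_sub]
              _ ≤ ‖L j‖ * ‖x - y‖ := (L j).le_opNorm _
          calc ω j * ‖(ContinuousLinearMap.adjoint (L j)) (F j (L j x) - F j (L j y))‖
              ≤ ω j * (‖L j‖ * (‖L j‖ * ‖x - y‖)) := by
                apply mul_le_mul_of_nonneg_left _ (hω j).1.le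
                exact le_trans h1 (mul_le_mul_of_nonneg_left h2 (norm_nonneg _))
            _ = ω j * ‖L j‖ ^ 2 * ‖x - y‖ := by ring
      _ = K * ‖x - y‖ := by rw [hKdef, Finset.sum_mul]
  have hAcont : Continuous A := by
    have hl : LipschitzWith (Real.toNNReal K) A := by
      apply LipschitzWith.of_dist_le_mul
      intro a b
      rw [dist_eq_norm, dist_eq_norm, Real.coe_toNNReal K hK0]
      exact hlip a b
    exact hl.continuous
  -- regularized solutions
  have hVIn : ∀ n : ℕ, ∃ x ∈ C, ∀ y ∈ C, 0 ≤ ⟪y - x, A x + (1 / ((n : ℝ) + 1)) • x⟫ :=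
    fun n => RelaxedVI.exists_reg_VI C ⟨x0, hx0⟩ hCcl hCcv A K hK0 hmono hlip _ (by positivity)
  choose xs hxsC hxsVI using hVIn
  -- constants for the uniform bound
  obtain ⟨u0, hu0def⟩ : ∃ u0 : G i, u0 = L i x0 := ⟨_, rfl⟩
  obtain ⟨c1, hc1def⟩ : ∃ c1 : ℝ, c1 = ∑ j, ω j * (‖L j‖ * ‖F j (L j x0) - p j‖) := ⟨_, rfl⟩
  have hc1n : 0 ≤ c1 := by
    rw [hc1def]
    exact Finset.sum_nonneg fun j _ => mul_nonneg (hω j).1.le (by positivity)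
  obtain ⟨c2, hc2def⟩ : ∃ c2 : ℝ, c2 = 3 / 2 * c1 / ω i := ⟨_, rfl⟩
  have hc2n : 0 ≤ c2 := by
    rw [hc2def]; exact div_nonneg (by linarith) (hω i).1.le
  obtain ⟨c3, hc3def⟩ : ∃ c3 : ℝ, c3 = c2 * Cs := ⟨_, rfl⟩
  have hc3n : 0 ≤ c3 := by rw [hc3def]; exact mul_nonneg hc2n hCs.le
  obtain ⟨t, htdef⟩ : ∃ t : ℝ, t = c3 + 2 := ⟨_, rfl⟩
  have ht0 : 0 ≤ t := by rw [htdef]; linarith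
  have ht2 : 2 ≤ t := by rw [htdef]; linarith
  obtain ⟨R0, hR0⟩ := hcoer' (‖p i‖ + t + 2)
  obtain ⟨Rt, hRtdef⟩ : ∃ Rt : ℝ, Rt = max R0 0 := ⟨_, rfl⟩
  have hRtn : 0 ≤ Rt := by rw [hRtdef]; exact le_max_right _ _
  obtain ⟨c4, hc4def⟩ : ∃ c4 : ℝ, c4 = ‖u0‖ + ‖p i‖ + ‖u0‖ * ‖p i‖ := ⟨_, rfl⟩
  have hc4n : 0 ≤ c4 := by rw [hc4def]; positivity
  obtain ⟨c5, hc5def⟩ : ∃ c5 : ℝ, c5 = (Rt + ‖p i‖ + t + 1) * (‖p i‖ + t + 2) := ⟨_, rfl⟩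
  have hc5n : 0 ≤ c5 := by
    rw [hc5def]
    exact mul_nonneg (by linarith [norm_nonneg (p i)]) (by linarith [norm_nonneg (p i)])
  obtain ⟨cst, hcstdef⟩ : ∃ cst : ℝ, cst = c3 + c4 + c5 := ⟨_, rfl⟩
  have hcstn : 0 ≤ cst := by rw [hcstdef]; linarith
  obtain ⟨Mb, hMbdef⟩ : ∃ Mb : ℝ,
      Mb = max (max 1 (2 * ‖x0‖)) (Cs * ((2 * cst + 1) + cst * (2 * cst + 2))) := ⟨_, rfl⟩
  -- the key uniform bound
  have key : ∀ ε : ℝ, 0 < ε → ∀ x ∈ C, (∀ y ∈ C, 0 ≤ ⟪y - x, A x + ε • x⟫) → ‖x‖ ≤ Mb := by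
    intro ε hε x hxC hVI
    by_cases hsmall : ‖x‖ ≤ max 1 (2 * ‖x0‖)
    · rw [hMbdef]; exact le_trans hsmall (le_max_left _ _)
    push_neg at hsmall
    have hx1 : 1 ≤ ‖x‖ := le_of_lt (lt_of_le_of_lt (le_max_left _ _) hsmall)
    have hx2 : 2 * ‖x0‖ ≤ ‖x‖ := le_of_lt (lt_of_le_of_lt (le_max_right _ _) hsmall)
    -- step 1 : the sum is nonpositive
    have hS : ∑ j, ω j * ⟪L j (x - x0), F j (L j x) - p j⟫ ≤ 0 := by
      have h0 := hVI x0 hx0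
      rw [inner_add_right, real_inner_smul_right, hinner] at h0
      have e2 : ∑ j, ω j * ⟪L j (x0 - x), F j (L j x) - p j⟫
          = - ∑ j, ω j * ⟪L j (x - x0), F j (L j x) - p j⟫ := by
        rw [← Finset.sum_neg_distrib]
        apply Finset.sum_congr rfl
        intro j _
        rw [show x0 - x = -(x - x0) by abel, map_neg, inner_neg_left]
        ring
      rw [e2] at h0
      have e3 : ⟪x0 - x, x⟫ ≤ 0 := by
        rw [inner_sub_left, real_inner_self_eq_norm_sq]
        have := real_inner_le_norm x0 x
        nlinarith
      have hmul : ε * ⟪x0 - x, x⟫ ≤ 0 := mul_nonpos_of_nonneg_of_nonpos hε.le e3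
      linarith
    -- step 2 : bound for the i-th term
    have hTbound : ⟪L i (x - x0), F i (L i x) - p i⟫ ≤ c2 * ‖x‖ := by
      have hsplit := Finset.add_sum_erase Finset.univ
        (fun j => ω j * ⟪L j (x - x0), F j (L j x) - p j⟫) (Finset.mem_univ i)
      have hterm : ∀ j : I,
          -(ω j * (‖L j‖ * ‖F j (L j x0) - p j‖) * (3 / 2 * ‖x‖))
            ≤ ω j * ⟪L j (x - x0), F j (L j x) - p j⟫ := by
        intro j
        have hsplit2 : ⟪L j (x - x0), F j (L j x) - p j⟫
            = ⟪L j x - L j x0, F j (L j x) - F j (L j x0)⟫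
              + ⟪L j (x - x0), F j (L j x0) - p j⟫ := by
          rw [map_sub, ← inner_add_right]
          congr 1
          abel
        have h1 : 0 ≤ ⟪L j x - L j x0, F j (L j x) - F j (L j x0)⟫ :=
          le_trans (sq_nonneg _) (hF j _ _)
        have h2 : -(‖L j (x - x0)‖ * ‖F j (L j x0) - p j‖)
            ≤ ⟪L j (x - x0), F j (L j x0) - p j⟫ :=
          (abs_le.1 (abs_real_inner_le_norm _ _)).1
        have h3 : ‖L j (x - x0)‖ ≤ ‖L j‖ * (3 / 2 * ‖x‖) := by
          calc ‖L j (x - x0)‖ ≤ ‖L j‖ * ‖x - x0‖ := (L j).le_opNorm _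
            _ ≤ ‖L j‖ * (3 / 2 * ‖x‖) := by
                apply mul_le_mul_of_nonneg_left _ (norm_nonneg (L j))
                have := norm_sub_le x x0
                linarith
        have h4 : ‖L j (x - x0)‖ * ‖F j (L j x0) - p j‖
            ≤ ‖L j‖ * (3 / 2 * ‖x‖) * ‖F j (L j x0) - p j‖ :=
          mul_le_mul_of_nonneg_right h3 (norm_nonneg _)
        have h5 : -(‖L j‖ * (3 / 2 * ‖x‖) * ‖F j (L j x0) - p j‖)
            ≤ ⟪L j (x - x0), F j (L j x) - p j⟫ := by
          rw [hsplit2]; linarith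
        have h6 := mul_le_mul_of_nonneg_left h5 (hω j).1.le
        calc -(ω j * (‖L j‖ * ‖F j (L j x0) - p j‖) * (3 / 2 * ‖x‖))
            = ω j * (-(‖L j‖ * (3 / 2 * ‖x‖) * ‖F j (L j x0) - p j‖)) := by ring
          _ ≤ ω j * ⟪L j (x - x0), F j (L j x) - p j⟫ := h6
      have hsum2 : ∑ j ∈ Finset.univ.erase i, -(ω j * ⟪L j (x - x0), F j (L j x) - p j⟫)
          ≤ ∑ j ∈ Finset.univ.erase i,
              ω j * (‖L j‖ * ‖F j (L j x0) - p j‖) * (3 / 2 * ‖x‖) := by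
        apply Finset.sum_le_sum
        intro j _
        have := hterm j
        linarith
      have hsum3 : ∑ j ∈ Finset.univ.erase i,
            ω j * (‖L j‖ * ‖F j (L j x0) - p j‖) * (3 / 2 * ‖x‖)
          ≤ ∑ j, ω j * (‖L j‖ * ‖F j (L j x0) - p j‖) * (3 / 2 * ‖x‖) := by
        apply Finset.sum_le_sum_of_subset_of_nonneg (Finset.erase_subset _ _)
        intro j _ _
        have h0 : (0:ℝ) ≤ 3 / 2 * ‖x‖ := by linarith
        exact mul_nonneg (mul_nonneg (hω j).1.le
          (mul_nonneg (norm_nonneg (L j)) (norm_nonneg _))) h0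
      have hsum4 : ∑ j, ω j * (‖L j‖ * ‖F j (L j x0) - p j‖) * (3 / 2 * ‖x‖)
          = c1 * (3 / 2 * ‖x‖) := by
        rw [hc1def, Finset.sum_mul]
      have hneg : - ∑ j ∈ Finset.univ.erase i, ω j * ⟪L j (x - x0), F j (L j x) - p j⟫
          = ∑ j ∈ Finset.univ.erase i, -(ω j * ⟪L j (x - x0), F j (L j x) - p j⟫) := by
        rw [Finset.sum_neg_distrib]
      have h6 : ω i * ⟪L i (x - x0), F i (L i x) - p i⟫ ≤ c1 * (3 / 2 * ‖x‖) := by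
        have e : ω i * ⟪L i (x - x0), F i (L i x) - p i⟫
            = (∑ j, ω j * ⟪L j (x - x0), F j (L j x) - p j⟫)
              - ∑ j ∈ Finset.univ.erase i, ω j * ⟪L j (x - x0), F j (L j x) - p j⟫ := by
          rw [← hsplit]; ring
        rw [e]
        linarith
      have hωi := (hω i).1
      rw [hc2def, div_mul_eq_mul_div, le_div_iff₀ hωi]
      calc ⟪L i (x - x0), F i (L i x) - p i⟫ * ω i
          = ω i * ⟪L i (x - x0), F i (L i x) - p i⟫ := by ring
        _ ≤ c1 * (3 / 2 * ‖x‖) := h6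
        _ = 3 / 2 * c1 * ‖x‖ := by ring
    -- abbreviations
    obtain ⟨xt, hxt⟩ : ∃ xt : G i, xt = F i (L i x) := ⟨_, rfl⟩
    obtain ⟨b, hb⟩ : ∃ b : G i, b = L i x - xt := ⟨_, rfl⟩
    rw [← hxt] at hTbound
    -- step 4
    have h4 : ‖xt‖ ^ 2 - c4 * (‖xt‖ + 1) + ⟪b, xt - p i⟫ ≤ ⟪L i (x - x0), xt - p i⟫ := by
      have e : L i (x - x0) = (xt - u0) + b := by
        rw [map_sub, hb, hu0def]; abel
      rw [e, inner_add_left]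
      have e2 : ⟪xt - u0, xt - p i⟫ = ‖xt‖ ^ 2 - ⟪xt, p i⟫ - ⟪u0, xt⟫ + ⟪u0, p i⟫ := by
        rw [inner_sub_left, inner_sub_right, inner_sub_right, real_inner_self_eq_norm_sq]
        ring
      rw [e2]
      have b1 : ⟪xt, p i⟫ ≤ ‖xt‖ * ‖p i‖ := real_inner_le_norm _ _
      have b2 : ⟪u0, xt⟫ ≤ ‖u0‖ * ‖xt‖ := real_inner_le_norm _ _
      have b3 : -(‖u0‖ * ‖p i‖) ≤ ⟪u0, p i⟫ := (abs_le.1 (abs_real_inner_le_norm _ _)).1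
      rw [hc4def]
      nlinarith [norm_nonneg xt, norm_nonneg u0, norm_nonneg (p i),
        mul_nonneg (norm_nonneg u0) (norm_nonneg (p i)),
        mul_nonneg (mul_nonneg (norm_nonneg u0) (norm_nonneg (p i))) (norm_nonneg xt)]
    -- step 5
    have h5 : (t - 1) * ‖b‖ - c5 * (‖xt‖ + 1) ≤ ⟪b, xt - p i⟫ := by
      by_cases hbz : b = 0
      · rw [hbz]
        simp only [inner_zero_left, norm_zero]
        have h0 : 0 ≤ c5 * (‖xt‖ + 1) := mul_nonneg hc5n (by positivity)
        linarith
      · have hbn : 0 < ‖b‖ := norm_pos_iff.2 hbz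
        obtain ⟨v, hv⟩ := RelaxedVI.approx_surj (hF i) hcoer' (p i + (t / ‖b‖) • b) one_pos
        obtain ⟨w, hw⟩ : ∃ w : G i, w = F i v := ⟨_, rfl⟩
        rw [← hw] at hv
        have hwb : ‖w‖ ≤ ‖p i‖ + t + 1 := by
          have h1 : ‖w‖ ≤ ‖w - (p i + (t / ‖b‖) • b)‖ + ‖p i + (t / ‖b‖) • b‖ := by
            calc ‖w‖ = ‖(w - (p i + (t / ‖b‖) • b)) + (p i + (t / ‖b‖) • b)‖ := by
                  congr 1; abel
              _ ≤ _ := norm_add_le _ _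
          have h2 : ‖p i + (t / ‖b‖) • b‖ ≤ ‖p i‖ + t := by
            calc ‖p i + (t / ‖b‖) • b‖ ≤ ‖p i‖ + ‖(t / ‖b‖) • b‖ := norm_add_le _ _
              _ = ‖p i‖ + t := by
                  rw [norm_smul, Real.norm_eq_abs, abs_of_nonneg (div_nonneg ht0 hbn.le),
                    div_mul_cancel₀ _ (ne_of_gt hbn)]
          linarith
        have hvR : ‖v‖ ≤ Rt := by
          by_contra hcon
          push_neg at hcon
          have h1 : R0 ≤ ‖v‖ := by
            rw [hRtdef] at hcon
            exact le_trans (le_max_left _ _) hcon.le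
          have h2 := hR0 v h1
          rw [← hw] at h2
          linarith
        have hmonog : 0 ≤ ⟪b - (v - w), xt - w⟫ := by
          have h := hF i (L i x) v
          have e : b - (v - w) = (L i x - v) - (F i (L i x) - F i v) := by
            rw [hb, hxt, hw]; abel
          have e2 : xt - w = F i (L i x) - F i v := by rw [hxt, hw]
          rw [e, e2, inner_sub_left, real_inner_self_eq_norm_sq]
          linarith
        have hdec : ⟪b, xt - p i⟫
            = ⟪b, xt - w⟫ + ⟪b, w - (p i + (t / ‖b‖) • b)⟫ + ⟪b, (t / ‖b‖) • b⟫ := by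
          rw [← inner_add_right, ← inner_add_right]
          congr 1
          abel
        have hb1 : -(c5 * (‖xt‖ + 1)) ≤ ⟪b, xt - w⟫ := by
          have h1 : ⟪v - w, xt - w⟫ ≤ ⟪b, xt - w⟫ := by
            have h' := hmonog
            rw [inner_sub_left] at h'
            linarith
          have h2 : -(‖v - w‖ * ‖xt - w‖) ≤ ⟪v - w, xt - w⟫ :=
            (abs_le.1 (abs_real_inner_le_norm _ _)).1
          have h3 : ‖v - w‖ ≤ Rt + ‖p i‖ + t + 1 := by
            calc ‖v - w‖ ≤ ‖v‖ + ‖w‖ := norm_sub_le _ _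
              _ ≤ Rt + (‖p i‖ + t + 1) := add_le_add hvR hwb
              _ = Rt + ‖p i‖ + t + 1 := by ring
          have h4 : ‖xt - w‖ ≤ (‖p i‖ + t + 2) * (‖xt‖ + 1) := by
            have h5' : ‖xt - w‖ ≤ ‖xt‖ + (‖p i‖ + t + 1) := by
              calc ‖xt - w‖ ≤ ‖xt‖ + ‖w‖ := norm_sub_le _ _
                _ ≤ _ := by linarith
            nlinarith [norm_nonneg xt, norm_nonneg (p i)]
          have h6 : ‖v - w‖ * ‖xt - w‖
              ≤ (Rt + ‖p i‖ + t + 1) * ((‖p i‖ + t + 2) * (‖xt‖ + 1)) := by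
            apply mul_le_mul h3 h4 (norm_nonneg _)
            linarith [norm_nonneg (p i)]
          rw [hc5def]
          nlinarith
        have hb2 : -‖b‖ ≤ ⟪b, w - (p i + (t / ‖b‖) • b)⟫ := by
          have h1 : |⟪b, w - (p i + (t / ‖b‖) • b)⟫|
              ≤ ‖b‖ * ‖w - (p i + (t / ‖b‖) • b)‖ := abs_real_inner_le_norm _ _
          have h2 := (abs_le.1 h1).1
          nlinarith [norm_nonneg b, hv]
        have hb3 : ⟪b, (t / ‖b‖) • b⟫ = t * ‖b‖ := by
          rw [real_inner_smul_right, real_inner_self_eq_norm_sq]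
          field_simp
        rw [hdec, hb3]
        linarith
    -- combining
    have hux : ‖x‖ ≤ Cs * (‖xt‖ + ‖b‖) := by
      have e : xt + b = L i x := by rw [hb]; abel
      have h1 : ‖L i x‖ ≤ ‖xt‖ + ‖b‖ := by
        rw [← e]; exact norm_add_le _ _
      calc ‖x‖ ≤ Cs * ‖L i x‖ := hLb x
        _ ≤ Cs * (‖xt‖ + ‖b‖) := mul_le_mul_of_nonneg_left h1 hCs.le
    have hchain : ⟪L i (x - x0), xt - p i⟫ ≤ c3 * (‖xt‖ + ‖b‖) := by
      have h1 : c2 * ‖x‖ ≤ c2 * (Cs * (‖xt‖ + ‖b‖)) := mul_le_mul_of_nonneg_left hux hc2n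
      calc ⟪L i (x - x0), xt - p i⟫ ≤ c2 * ‖x‖ := hTbound
        _ ≤ c2 * (Cs * (‖xt‖ + ‖b‖)) := h1
        _ = c3 * (‖xt‖ + ‖b‖) := by rw [hc3def]; ring
    have hfinal : ‖xt‖ ^ 2 + ‖b‖ ≤ cst * (‖xt‖ + 1) := by
      have h7 : ‖xt‖ ^ 2 - c4 * (‖xt‖ + 1) + ((t - 1) * ‖b‖ - c5 * (‖xt‖ + 1))
          ≤ c3 * (‖xt‖ + ‖b‖) := by linarith
      have ht' : t - 1 = c3 + 1 := by rw [htdef]; ring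
      rw [ht'] at h7
      have e : cst * (‖xt‖ + 1) = c3 * (‖xt‖ + 1) + c4 * (‖xt‖ + 1) + c5 * (‖xt‖ + 1) := by
        rw [hcstdef]; ring
      rw [e]
      have h8 : c3 * ‖xt‖ ≤ c3 * (‖xt‖ + 1) := by nlinarith [hc3n]
      have h7' : ‖xt‖ ^ 2 - c4 * (‖xt‖ + 1) + ((c3 + 1) * ‖b‖ - c5 * (‖xt‖ + 1))
          ≤ c3 * ‖xt‖ + c3 * ‖b‖ := by
        calc ‖xt‖ ^ 2 - c4 * (‖xt‖ + 1) + ((c3 + 1) * ‖b‖ - c5 * (‖xt‖ + 1))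
            ≤ c3 * (‖xt‖ + ‖b‖) := h7
          _ = c3 * ‖xt‖ + c3 * ‖b‖ := by ring
      have hb' : (c3 + 1) * ‖b‖ = c3 * ‖b‖ + ‖b‖ := by ring
      linarith [h7', h8]
    have hxtb : ‖xt‖ ≤ 2 * cst + 1 := by
      nlinarith [norm_nonneg b, norm_nonneg xt, hcstn, hfinal,
        sq_nonneg (‖xt‖ - (2 * cst + 1)), mul_nonneg hcstn hcstn,
        mul_nonneg hcstn (norm_nonneg xt)]
    have hxtQ : ‖xt‖ + 1 ≤ 2 * cst + 2 := by linarith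
    have h9 : cst * (‖xt‖ + 1) ≤ cst * (2 * cst + 2) := mul_le_mul_of_nonneg_left hxtQ hcstn
    have hbb : ‖b‖ ≤ cst * (2 * cst + 2) := by linarith [hfinal, h9, sq_nonneg ‖xt‖]
    calc ‖x‖ ≤ Cs * (‖xt‖ + ‖b‖) := hux
      _ ≤ Cs * ((2 * cst + 1) + cst * (2 * cst + 2)) := by
          apply mul_le_mul_of_nonneg_left _ hCs.le
          linarith
      _ ≤ Mb := by rw [hMbdef]; exact le_max_right _ _
  -- uniform bound on the sequence
  have hxsB : ∀ n : ℕ, ‖xs n‖ ≤ Mb := fun n =>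
    key _ (by positivity) _ (hxsC n) (hxsVI n)
  -- weak cluster point
  obtain ⟨U, z, hUle, hz⟩ := RelaxedVI.exists_weak_cluster xs Mb hxsB
  haveI : (U : Filter ℕ).NeBot := U.neBot
  -- z belongs to C
  obtain ⟨P, hP⟩ := RelaxedVI.exists_proj C ⟨x0, hx0⟩ hCcl hCcv
  have hzC : z ∈ C := by
    have hn : ∀ n : ℕ, ⟪xs n, z - P z⟫ ≤ ⟪P z, z - P z⟫ := by
      intro n
      have h1 := (hP z).2 (xs n) (hxsC n)
      have e : ⟪z - P z, xs n - P z⟫ = ⟪xs n, z - P z⟫ - ⟪P z, z - P z⟫ := by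
        rw [inner_sub_right, real_inner_comm (z - P z) (xs n),
          real_inner_comm (z - P z) (P z)]
      rw [e] at h1
      linarith
    have hlim := le_of_tendsto (hz (z - P z)) (Filter.Eventually.of_forall hn)
    have h2 : ⟪z - P z, z - P z⟫ ≤ 0 := by
      rw [inner_sub_left]; linarith
    have h3 : z - P z = 0 := real_inner_self_nonpos.1 h2
    have h4 : z = P z := by rwa [sub_eq_zero] at h3
    rw [h4]; exact (hP z).1
  -- Minty's trick : limit of the inequalities
  have hminty : ∀ y ∈ C, 0 ≤ ⟪y - z, A y⟫ := by
    intro y hy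
    have hterm : ∀ n : ℕ, 0 ≤ ⟪y - xs n, A y⟫ + (1 / ((n : ℝ) + 1)) * ⟪y - xs n, y⟫ := by
      intro n
      have h1 := hxsVI n y hy
      have h2 := hmono y (xs n)
      have h3 : 0 ≤ (1 / ((n : ℝ) + 1)) * ⟪y - xs n, y - xs n⟫ :=
        mul_nonneg (by positivity) real_inner_self_nonneg
      rw [inner_add_right, real_inner_smul_right] at h1
      rw [inner_sub_right] at h2
      rw [inner_sub_right (y - xs n) y (xs n)] at h3
      linarith
    have hlim : Tendsto (fun n => ⟪y - xs n, A y⟫ + (1 / ((n : ℝ) + 1)) * ⟪y - xs n, y⟫)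
        (U : Filter ℕ) (nhds (⟪y - z, A y⟫ + 0)) := by
      apply Tendsto.add
      · have h1 := hz (A y)
        have h2 : Tendsto (fun n => ⟪y, A y⟫ - ⟪xs n, A y⟫) (U : Filter ℕ)
            (nhds (⟪y, A y⟫ - ⟪z, A y⟫)) := tendsto_const_nhds.sub h1
        have e : (fun n => ⟪y - xs n, A y⟫) = fun n => ⟪y, A y⟫ - ⟪xs n, A y⟫ := by
          funext n; rw [inner_sub_left]
        rw [e, show ⟪y - z, A y⟫ = ⟪y, A y⟫ - ⟪z, A y⟫ from inner_sub_left y z (A y)]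
        exact h2
      · apply squeeze_zero_norm (a := fun n : ℕ => (1 / ((n : ℝ) + 1)) * ((‖y‖ + Mb) * ‖y‖))
        · intro n
          have hc : |⟪y - xs n, y⟫| ≤ (‖y‖ + Mb) * ‖y‖ := by
            calc |⟪y - xs n, y⟫| ≤ ‖y - xs n‖ * ‖y‖ := abs_real_inner_le_norm _ _
              _ ≤ (‖y‖ + Mb) * ‖y‖ := by
                  apply mul_le_mul_of_nonneg_right _ (norm_nonneg _)
                  calc ‖y - xs n‖ ≤ ‖y‖ + ‖xs n‖ := norm_sub_le _ _
                    _ ≤ ‖y‖ + Mb := by linarith [hxsB n]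
          calc ‖(1 / ((n : ℝ) + 1)) * ⟪y - xs n, y⟫‖
              = (1 / ((n : ℝ) + 1)) * |⟪y - xs n, y⟫| := by
                rw [Real.norm_eq_abs, abs_mul, abs_of_pos (by positivity :
                  (0:ℝ) < 1 / ((n : ℝ) + 1))]
            _ ≤ (1 / ((n : ℝ) + 1)) * ((‖y‖ + Mb) * ‖y‖) :=
                mul_le_mul_of_nonneg_left hc (by positivity)
        · have h0 : Tendsto (fun n : ℕ => (1 / ((n : ℝ) + 1)) * ((‖y‖ + Mb) * ‖y‖)) atTop
              (nhds (0 * ((‖y‖ + Mb) * ‖y‖))) :=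
            tendsto_one_div_add_atTop_nhds_zero_nat.mul_const _
          rw [zero_mul] at h0
          exact h0.mono_left hUle
    have h := ge_of_tendsto hlim (Filter.Eventually.of_forall hterm)
    linarith
  -- conclusion via Minty's lemma
  refine ⟨z, hzC, ?_⟩
  intro y hy
  have hseg : ∀ s : ℝ, s ∈ Set.Ioc (0:ℝ) 1 → 0 ≤ ⟪y - z, A (z + s • (y - z))⟫ := by
    intro s hs
    have hmem : z + s • (y - z) ∈ C := by
      have h := hCcv hzC hy (by linarith [hs.2] : (0:ℝ) ≤ 1 - s) hs.1.le (by ring)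
      have e : (1 - s) • z + s • y = z + s • (y - z) := by module
      rwa [e] at h
    have h1 := hminty _ hmem
    have e : (z + s • (y - z)) - z = s • (y - z) := by abel
    rw [e, real_inner_smul_left] at h1
    exact (mul_nonneg_iff_of_pos_left hs.1).1 h1
  have hcont : Continuous (fun s : ℝ => ⟪y - z, A (z + s • (y - z))⟫) := by
    apply Continuous.inner continuous_const
    exact hAcont.comp (continuous_const.add (continuous_id.smul continuous_const))
  have hlim0 : Tendsto (fun s : ℝ => ⟪y - z, A (z + s • (y - z))⟫)
      (nhdsWithin 0 (Set.Ioi 0)) (nhds ⟪y - z, A z⟫) := by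
    have h1 := hcont.tendsto 0
    simp only [zero_smul, add_zero] at h1
    exact h1.mono_left nhdsWithin_le_nhds
  have hfin : 0 ≤ ⟪y - z, A z⟫ := by
    apply ge_of_tendsto hlim0
    filter_upwards [Ioc_mem_nhdsGT_of_mem (Set.left_mem_Ico.2 zero_lt_one)] with s hs
    exact hseg s hs
  rw [ge_iff_le, ← hinner (y - z) z]
  exact hfin
end
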